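/- arXiv:2007.13426 — 9 statements merged into one kernel-verified Lean document; each statement's English description precedes it below -/
import Mathlib

section
/- Let G be an abelian group, F a field, and R a G-graded unital associative F-algebra that is graded-simple. If X is an invertible element of R such that the inner automorphism Int X (given by Y ↦ X Y X⁻¹) maps each homogeneous component R_h into itself, then every nonzero homogeneous component X_g of X is invertible. -/
/-- A `G`-graded algebra is graded-simple if `R · R ≠ 0` and its only graded
two-sided ideals are `0` and `R`. -/
def IsGradedSimple {G : Type*} [AddCommGroup G] [DecidableEq G]
    {F : Type*} [Field F] {R : Type*} [Ring R] [Algebra F R]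
    (ℬ : G → Submodule F R) [GradedAlgebra ℬ] : Prop :=
  (∃ x y : R, x * y ≠ 0) ∧
    ∀ I : TwoSidedIdeal R,
      (∀ x ∈ I, ∀ g : G, (DirectSum.decompose ℬ x g : R) ∈ I) → I = ⊥ ∨ I = ⊤

/-!
Write `a = X_g` and `σ(Y) = X Y X⁻¹`. Comparing the components of degree `g + h` in
`X Y = σ(Y) X` for homogeneous `Y` of degree `h` (using that `σ` preserves degrees and `G` is
abelian) gives `a Y = σ(Y) a` for all `Y`. Hence the left ideal `R a` is two-sided, and it is
graded because `a` is homogeneous. By graded simplicity it is `R`, so `a` has a left inverse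
`u`; then `X⁻¹ u X` is a right inverse of `a`, since `a (X⁻¹ u X) = u a = 1`.
-/

namespace TwoSidedIdeal

variable {R : Type*} [Ring R]

def leftMultiples (a : R) (h : ∀ y, ∃ z, a * y = z * a) : TwoSidedIdeal R :=
  mk' {x | ∃ u, x = u * a} ⟨0, (zero_mul a).symm⟩
    (by rintro _ _ ⟨u, rfl⟩ ⟨v, rfl⟩; exact ⟨u + v, (add_mul u v a).symm⟩)
    (by rintro _ ⟨u, rfl⟩; exact ⟨-u, (neg_mul u a).symm⟩)
    (by rintro x _ ⟨u, rfl⟩; exact ⟨x * u, (mul_assoc x u a).symm⟩)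
    (by
      rintro _ y ⟨u, rfl⟩
      obtain ⟨z, hz⟩ := h y
      exact ⟨u * z, by rw [mul_assoc, hz, mul_assoc]⟩)

theorem mem_leftMultiples {a : R} {h : ∀ y, ∃ z, a * y = z * a} {x : R} :
    x ∈ leftMultiples a h ↔ ∃ u, x = u * a :=
  mem_mk' _ _ _ _ _ _ x

end TwoSidedIdeal

theorem isUnit_of_mul_eq_one_of_mul_eq_conj_mul {R : Type*} [Ring R] {X : Rˣ} {a u : R}
    (hconj : ∀ Y, a * Y = X * Y * ↑X⁻¹ * a) (hu : u * a = 1) : IsUnit a := by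
  have hright : a * (↑X⁻¹ * u * X) = 1 := by
    simp only [hconj, ← mul_assoc, Units.mul_inv, one_mul, Units.mul_inv_cancel_right, hu]
  have hv : u = ↑X⁻¹ * u * X := left_inv_eq_right_inv hu hright
  exact isUnit_iff_exists.2 ⟨u, hv ▸ hright, hu⟩

namespace DirectSum

variable {ι R σ : Type*} [DecidableEq ι] [Ring R] [SetLike σ R] [AddSubmonoidClass σ R]

theorem coe_decompose_mul_of_right_mem_sub [AddGroup ι] (𝒜 : ι → σ) [GradedRing 𝒜] {a : R}
    {g : ι} (ha : a ∈ 𝒜 g) (u : R) (k : ι) :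
    (decompose 𝒜 (u * a) k : R) = decompose 𝒜 u (k - g) * a := by
  rw [← coe_decompose_mul_add_of_right_mem 𝒜 ha, sub_add_cancel]

theorem coe_decompose_mul_eq_conj_mul [AddCancelCommMonoid ι] (𝒜 : ι → σ) [GradedRing 𝒜]
    (X : Rˣ) (hstab : ∀ h, ∀ Y ∈ 𝒜 h, (X : R) * Y * ↑X⁻¹ ∈ 𝒜 h) (g : ι) (Y : R) :
    (decompose 𝒜 (X : R) g : R) * Y = X * Y * ↑X⁻¹ * decompose 𝒜 (X : R) g := by
  induction Y using Decomposition.inductionOn 𝒜 with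
  | zero => simp
  | @homogeneous h Y =>
    have hXY : (X : R) * Y = (X * Y * ↑X⁻¹) * X := by
      rw [mul_assoc _ _ (X : R), Units.inv_mul, mul_one]
    rw [← coe_decompose_mul_add_of_right_mem 𝒜 Y.2,
      ← coe_decompose_mul_add_of_left_mem 𝒜 (hstab h Y Y.2), ← hXY, add_comm]
  | add Y Y' hY hY' => rw [mul_add, hY, hY', mul_add, add_mul, add_mul]

end DirectSum

/-- If `R` is a graded-simple `G`-graded unital associative algebra (`G` abelian) and
`X` is an invertible element whose inner automorphism stabilizes the grading, then
every nonzero homogeneous component of `X` is invertible. -/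
theorem inner_automorphism_component_isUnit
    {G : Type*} [AddCommGroup G] [DecidableEq G]
    {F : Type*} [Field F] {R : Type*} [Ring R] [Algebra F R]
    (ℬ : G → Submodule F R) [GradedAlgebra ℬ]
    (hsimple : IsGradedSimple ℬ)
    (X : Rˣ)
    (hstab : ∀ h : G, ∀ Y ∈ ℬ h, (X : R) * Y * (↑X⁻¹ : R) ∈ ℬ h)
    (g : G) (hg : (DirectSum.decompose ℬ (X : R) g : R) ≠ 0) :
    IsUnit (DirectSum.decompose ℬ (X : R) g : R) := by
  set a : R := (DirectSum.decompose ℬ (X : R) g : R)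
  have hconj : ∀ Y, a * Y = X * Y * ↑X⁻¹ * a :=
    DirectSum.coe_decompose_mul_eq_conj_mul ℬ X hstab g
  let I := TwoSidedIdeal.leftMultiples a fun Y ↦ ⟨_, hconj Y⟩
  have hgraded : ∀ x ∈ I, ∀ k, (DirectSum.decompose ℬ x k : R) ∈ I := by
    rintro _ hx k
    obtain ⟨u, rfl⟩ := TwoSidedIdeal.mem_leftMultiples.1 hx
    exact TwoSidedIdeal.mem_leftMultiples.2
      ⟨_, DirectSum.coe_decompose_mul_of_right_mem_sub ℬ (SetLike.coe_mem _) u k⟩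
  have haI : a ∈ I := TwoSidedIdeal.mem_leftMultiples.2 ⟨1, (one_mul a).symm⟩
  rcases hsimple.2 I hgraded with hbot | htop
  · exact absurd ((TwoSidedIdeal.mem_bot R).1 (hbot ▸ haI)) hg
  · obtain ⟨u, hu⟩ := TwoSidedIdeal.mem_leftMultiples.1 (htop ▸ TwoSidedIdeal.mem_top R)
    exact isUnit_of_mul_eq_one_of_mul_eq_conj_mul hconj hu.symm
end

section
/- Let G be an abelian group, F a field, and R a G-graded unital associative F-algebra that is graded-simple. If X ∈ R is invertible, Int X stabilizes the grading, and X_g ≠ 0 is a homogeneous component of X, then Int X_g = Int X, i.e. X_g Y X_g⁻¹ = X Y X⁻¹ for all Y ∈ R. -/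
/-!
Write `x = X_g`. Comparing the components of degree `g + h` in `X * Y = (X Y X⁻¹) * X` for
`Y` homogeneous of degree `h` gives `x * Y = (X Y X⁻¹) * x` for every `Y`, so `x` is a normal
element: `x R = R x`. Hence `x R` and the right annihilator of `x` are graded two-sided ideals;
graded-simplicity and `x ≠ 0` force `x R = R` and `ann x = 0`. So `x r = 1` for some `r`,
and `x (r x - 1) = 0` gives `r x = 1`. Finally `x Y x⁻¹ = X Y X⁻¹`.
-/

open DirectSum

namespace TwoSidedIdeal

variable {R : Type*} [Ring R]

def rightPrincipalOfNormal (x : R) (hx : ∀ y, ∃ z, y * x = x * z) : TwoSidedIdeal R :=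
  mk' {a | ∃ r, a = x * r} ⟨0, (mul_zero x).symm⟩
    (fun ⟨r, hr⟩ ⟨s, hs⟩ => ⟨r + s, by rw [hr, hs, mul_add]⟩)
    (fun ⟨r, hr⟩ => ⟨-r, by rw [hr, mul_neg]⟩)
    (fun {y _} ⟨r, hr⟩ => by
      obtain ⟨z, hz⟩ := hx y
      exact ⟨z * r, by rw [hr, ← mul_assoc, hz, mul_assoc]⟩)
    (fun {_ y} ⟨r, hr⟩ => ⟨r * y, by rw [hr, mul_assoc]⟩)

theorem mem_rightPrincipalOfNormal {x : R} {hx : ∀ y, ∃ z, y * x = x * z} {a : R} :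
    a ∈ rightPrincipalOfNormal x hx ↔ ∃ r, a = x * r :=
  mem_mk' ..

def rightAnnihilatorOfNormal (x : R) (hx : ∀ y, ∃ z, x * y = z * x) : TwoSidedIdeal R :=
  mk' {s | x * s = 0} (mul_zero x)
    (fun (hs : x * _ = 0) (ht : x * _ = 0) => show x * _ = 0 by rw [mul_add, hs, ht, add_zero])
    (fun (hs : x * _ = 0) => show x * _ = 0 by rw [mul_neg, hs, neg_zero])
    (fun {y _} (hs : x * _ = 0) => show x * _ = 0 by
      obtain ⟨z, hz⟩ := hx y
      rw [← mul_assoc, hz, mul_assoc, hs, mul_zero])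
    (fun {_ y} (hs : x * _ = 0) => show x * _ = 0 by rw [← mul_assoc, hs, zero_mul])

theorem mem_rightAnnihilatorOfNormal {x : R} {hx : ∀ y, ∃ z, x * y = z * x} {s : R} :
    s ∈ rightAnnihilatorOfNormal x hx ↔ x * s = 0 :=
  mem_mk' ..

end TwoSidedIdeal

namespace DirectSum

variable {ι R σ : Type*} [DecidableEq ι] [Ring R] [SetLike σ R] [AddSubmonoidClass σ R]
  (ℬ : ι → σ)

open TwoSidedIdeal

theorem decompose_mem_rightPrincipalOfNormal [AddGroup ι] [GradedRing ℬ] {g : ι} {x : R}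
    (hxg : x ∈ ℬ g) (hx : ∀ y, ∃ z, y * x = x * z) {a : R}
    (ha : a ∈ rightPrincipalOfNormal x hx) (k : ι) :
    (decompose ℬ a k : R) ∈ rightPrincipalOfNormal x hx := by
  obtain ⟨r, rfl⟩ := mem_rightPrincipalOfNormal.1 ha
  refine mem_rightPrincipalOfNormal.2 ⟨decompose ℬ r (-g + k), ?_⟩
  rw [← coe_decompose_mul_add_of_left_mem ℬ hxg, add_neg_cancel_left]

theorem decompose_mem_rightAnnihilatorOfNormal [AddLeftCancelMonoid ι] [GradedRing ℬ] {g : ι}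
    {x : R} (hxg : x ∈ ℬ g) (hx : ∀ y, ∃ z, x * y = z * x) {s : R}
    (hs : s ∈ rightAnnihilatorOfNormal x hx) (k : ι) :
    (decompose ℬ s k : R) ∈ rightAnnihilatorOfNormal x hx := by
  rw [mem_rightAnnihilatorOfNormal] at hs ⊢
  rw [← coe_decompose_mul_add_of_left_mem ℬ hxg, hs, decompose_zero, zero_apply,
    ZeroMemClass.coe_zero]

theorem coe_decompose_units_mul_eq_conj_mul [AddCancelCommMonoid ι] [GradedRing ℬ] {X : Rˣ}
    (hX : ∀ i, ∀ y ∈ ℬ i, (X : R) * y * ↑X⁻¹ ∈ ℬ i) (g : ι) (y : R) :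
    (decompose ℬ (X : R) g : R) * y = X * y * ↑X⁻¹ * decompose ℬ (X : R) g := by
  induction y using Decomposition.inductionOn ℬ with
  | zero => rw [mul_zero, mul_zero, zero_mul, zero_mul]
  | @homogeneous h y =>
    have hXy : (X : R) * y = X * y * ↑X⁻¹ * X := by rw [Units.inv_mul_cancel_right]
    rw [← coe_decompose_mul_add_of_right_mem ℬ y.2,
      ← coe_decompose_mul_add_of_left_mem ℬ (hX h y y.2), ← hXy, add_comm]
  | add y z hy hz => rw [mul_add, hy, hz, mul_add, add_mul, add_mul]

end DirectSum

open TwoSidedIdeal in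
theorem IsGradedSimple.isUnit_of_homogeneous_normal {G : Type*} [AddCommGroup G] [DecidableEq G]
    {F : Type*} [Field F] {R : Type*} [Ring R] [Algebra F R]
    {ℬ : G → Submodule F R} [GradedAlgebra ℬ] (hsimple : IsGradedSimple ℬ)
    {g : G} {x : R} (hxg : x ∈ ℬ g) (hx0 : x ≠ 0)
    (hleft : ∀ y, ∃ z, y * x = x * z) (hright : ∀ y, ∃ z, x * y = z * x) : IsUnit x := by
  have hprincipal : rightPrincipalOfNormal x hleft = ⊤ := by
    refine (hsimple.2 _ fun a ha =>
      decompose_mem_rightPrincipalOfNormal ℬ hxg hleft ha).resolve_left fun h => hx0 ?_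
    have hx : x ∈ rightPrincipalOfNormal x hleft :=
      mem_rightPrincipalOfNormal.2 ⟨1, (mul_one x).symm⟩
    rwa [h, mem_bot] at hx
  have hann : rightAnnihilatorOfNormal x hright = ⊥ := by
    refine (hsimple.2 _ fun s hs =>
      decompose_mem_rightAnnihilatorOfNormal ℬ hxg hright hs).resolve_right fun h => hx0 ?_
    have h1 : (1 : R) ∈ rightAnnihilatorOfNormal x hright := h ▸ mem_top R
    rwa [mem_rightAnnihilatorOfNormal, mul_one] at h1
  have h1 : (1 : R) ∈ rightPrincipalOfNormal x hleft := hprincipal ▸ mem_top R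
  obtain ⟨r, hxr⟩ := mem_rightPrincipalOfNormal.1 h1
  have hrx : r * x - 1 ∈ rightAnnihilatorOfNormal x hright := by
    rw [mem_rightAnnihilatorOfNormal, mul_sub, ← mul_assoc, ← hxr, one_mul, mul_one, sub_self]
  rw [hann, mem_bot, sub_eq_zero] at hrx
  exact ⟨⟨x, r, hxr.symm, hrx⟩, rfl⟩

/-- If `R` is a graded-simple `G`-graded unital associative algebra (`G` abelian),
`X` invertible with `Int X` stabilizing the grading, and `X_g ≠ 0` is a homogeneous
component of `X`, then `X_g` is invertible and `Int X_g = Int X`, i.e.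
`X_g Y X_g⁻¹ = X Y X⁻¹` for all `Y ∈ R`. -/
theorem inner_automorphism_eq_component_inner_automorphism
    {G : Type*} [AddCommGroup G] [DecidableEq G]
    {F : Type*} [Field F] {R : Type*} [Ring R] [Algebra F R]
    (ℬ : G → Submodule F R) [GradedAlgebra ℬ]
    (hsimple : IsGradedSimple ℬ)
    (X : Rˣ)
    (hstab : ∀ h : G, ∀ Y ∈ ℬ h, (X : R) * Y * (↑X⁻¹ : R) ∈ ℬ h)
    (g : G) (hg : (DirectSum.decompose ℬ (X : R) g : R) ≠ 0) :
    ∃ u : Rˣ, (u : R) = (DirectSum.decompose ℬ (X : R) g : R) ∧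
      ∀ Y : R, (u : R) * Y * (↑u⁻¹ : R) = (X : R) * Y * (↑X⁻¹ : R) := by
  have hcomm := DirectSum.coe_decompose_units_mul_eq_conj_mul ℬ hstab g
  have hleft : ∀ Y, ∃ Z, Y * (decompose ℬ (X : R) g : R) = decompose ℬ (X : R) g * Z :=
    fun Y => ⟨↑X⁻¹ * Y * X, by simp only [hcomm, mul_assoc, Units.mul_inv_cancel_left]⟩
  obtain ⟨u, hu⟩ :=
    hsimple.isUnit_of_homogeneous_normal (SetLike.coe_mem _) hg hleft fun Y => ⟨_, hcomm Y⟩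
  exact ⟨u, hu, fun Y => by rw [hu, hcomm, hu.symm, Units.mul_inv_cancel_right]⟩
end

section
/- Let G be an abelian group, F a field, and R a G-graded unital associative F-algebra. If Int X stabilizes the grading for an invertible X ∈ R, and X_g is a nonzero homogeneous component of X, then X_g Y = (X Y X⁻¹) X_g for every Y ∈ R. -/
open DirectSum

section

variable {ι R σ : Type*} [DecidableEq ι] [AddCancelCommMonoid ι] [Ring R] [SetLike σ R]
  [AddSubmonoidClass σ R] (𝒜 : ι → σ) [GradedRing 𝒜]

/-- Both sides are the degree `j + i` component of `a * y = z * a`. -/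
theorem coe_decompose_mul_eq_mul_coe_decompose_of_mul_eq {a y z : R} {i : ι}
    (hy : y ∈ 𝒜 i) (hz : z ∈ 𝒜 i) (h : a * y = z * a) (j : ι) :
    (decompose 𝒜 a j : R) * y = z * decompose 𝒜 a j := by
  rw [← coe_decompose_mul_add_of_right_mem 𝒜 (i := j) hy, h, add_comm,
    coe_decompose_mul_add_of_left_mem 𝒜 hz]

theorem coe_decompose_units_mul_eq_conj_mul (u : Rˣ)
    (hu : ∀ i, ∀ y ∈ 𝒜 i, (u : R) * y * ↑u⁻¹ ∈ 𝒜 i) (j : ι) (y : R) :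
    (decompose 𝒜 (u : R) j : R) * y = (u : R) * y * ↑u⁻¹ * decompose 𝒜 (u : R) j := by
  induction y using Decomposition.inductionOn 𝒜 with
  | zero => simp
  | @homogeneous i y =>
    refine coe_decompose_mul_eq_mul_coe_decompose_of_mul_eq 𝒜 y.2 (hu i y y.2) ?_ j
    rw [mul_assoc _ _ (u : R), Units.inv_mul, mul_one]
  | add y y' hy hy' => rw [mul_add, hy, hy', mul_add, add_mul, add_mul]

end

theorem component_semi_commutes_general
    {G : Type*} [AddCommGroup G] [DecidableEq G]
    {F : Type*} [Field F] {R : Type*} [Ring R] [Algebra F R]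
    (ℬ : G → Submodule F R) [GradedAlgebra ℬ]
    (X : Rˣ)
    (hstab : ∀ h : G, ∀ Y ∈ ℬ h, (X : R) * Y * (↑X⁻¹ : R) ∈ ℬ h)
    (g : G) :
    ∀ Y : R, (DirectSum.decompose ℬ (X : R) g : R) * Y =
      ((X : R) * Y * (↑X⁻¹ : R)) * (DirectSum.decompose ℬ (X : R) g : R) :=
  coe_decompose_units_mul_eq_conj_mul ℬ X hstab g

/-- In a `G`-graded unital associative algebra (`G` abelian), if the inner
automorphism `Int X` of an invertible element `X` stabilizes the grading and `X_g`
is a nonzero homogeneous component of `X`, then `X_g Y = (X Y X⁻¹) X_g` for all `Y`.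
No graded-simplicity is required. -/
theorem component_semi_commutes
    {G : Type*} [AddCommGroup G] [DecidableEq G]
    {F : Type*} [Field F] {R : Type*} [Ring R] [Algebra F R]
    (ℬ : G → Submodule F R) [GradedAlgebra ℬ]
    (X : Rˣ)
    (hstab : ∀ h : G, ∀ Y ∈ ℬ h, (X : R) * Y * (↑X⁻¹ : R) ∈ ℬ h)
    (g : G) (hg : (DirectSum.decompose ℬ (X : R) g : R) ≠ 0) :
    ∀ Y : R, (DirectSum.decompose ℬ (X : R) g : R) * Y =
      ((X : R) * Y * (↑X⁻¹ : R)) * (DirectSum.decompose ℬ (X : R) g : R) :=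
  component_semi_commutes_general ℬ X hstab g
end

section
/- Let G be an abelian group and R a graded-simple G-graded unital associative algebra. The group of inner automorphisms of R that stabilize the grading is isomorphic to R_hom^× / (Z(R) ∩ R_hom^×), where R_hom^× is the multiplicative group of homogeneous invertible elements of R. -/
/-- The subgroup of `Rˣ` consisting of homogeneous invertible elements
(`R_hom^×`).  (For a unit `u` with `u ∈ R_g`, the inverse is automatically
homogeneous of degree `-g`.) -/
def homogeneousUnits {G : Type*} [AddCommGroup G] [DecidableEq G]
    {F : Type*} [Field F] {R : Type*} [Ring R] [Algebra F R]
    (ℬ : G → Submodule F R) [GradedAlgebra ℬ] : Subgroup Rˣ where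
  carrier := {u : Rˣ | ∃ g : G, (u : R) ∈ ℬ g ∧ (↑u⁻¹ : R) ∈ ℬ (-g)}
  one_mem' := ⟨0, by simpa using (SetLike.one_mem_graded ℬ),
    by simpa using (SetLike.one_mem_graded ℬ)⟩
  mul_mem' := by
    rintro u v ⟨g, hg, hg'⟩ ⟨h, hh, hh'⟩
    refine ⟨g + h, ?_, ?_⟩
    · simpa using SetLike.mul_mem_graded hg hh
    · have : ((↑(u * v)⁻¹ : R)) = (↑v⁻¹ : R) * (↑u⁻¹ : R) := by
        simp [mul_inv_rev]
      rw [this]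
      have := SetLike.mul_mem_graded hh' hg'
      simpa [neg_add_rev] using this
  inv_mem' := by
    rintro u ⟨g, hg, hg'⟩
    exact ⟨-g, hg', by simpa using hg⟩

open DirectSum

section InnerAut

variable (F : Type*) [CommSemiring F] {R : Type*} [Semiring R] [Algebra F R]

def innerAlgAut : Rˣ →* (R ≃ₐ[F] R) :=
  (MulSemiringAction.toAlgAut (ConjAct Rˣ) F R).comp ConjAct.toConjAct.toMonoidHom

theorem innerAlgAut_apply (u : Rˣ) (r : R) : innerAlgAut F u r = u * r * ↑u⁻¹ := rfl

theorem innerAlgAut_eq_one_iff (u : Rˣ) :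
    innerAlgAut F u = 1 ↔ ∀ r : R, (u : R) * r = r * u := by
  simp only [AlgEquiv.ext_iff, innerAlgAut_apply, AlgEquiv.one_apply,
    Units.mul_inv_eq_iff_eq_mul]

end InnerAut

section GradedRing

variable {ι : Type*} [DecidableEq ι] {R : Type*} [Ring R] {σ : Type*} [SetLike σ R]
  [AddSubgroupClass σ R]

theorem exists_coe_decompose_ne_zero [AddMonoid ι] (𝒜 : ι → σ) [GradedRing 𝒜] {v : R}
    (hv : v ≠ 0) :
    ∃ g, (decompose 𝒜 v g : R) ≠ 0 := by
  by_contra! h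
  exact hv ((decompose 𝒜).injective (by ext g; simp [h g]))

theorem mem_neg_of_mul_eq_one [AddGroup ι] (𝒜 : ι → σ) [GradedRing 𝒜] {w a : R} {g : ι}
    (hw : w ∈ 𝒜 g) (hwa : w * a = 1) (haw : a * w = 1) : a ∈ 𝒜 (-g) := by
  have hwa' : w * decompose 𝒜 a (-g) = 1 := by
    rw [← coe_decompose_mul_add_of_left_mem 𝒜 hw, add_neg_cancel, hwa,
      decompose_of_mem_same 𝒜 SetLike.GradedOne.one_mem]
  rw [left_inv_eq_right_inv haw hwa']
  exact (decompose 𝒜 a (-g)).2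

theorem coe_decompose_mul_eq_of_mul_eq [AddCancelCommMonoid ι] (𝒜 : ι → σ) [GradedRing 𝒜]
    {Ψ : Type*} [FunLike Ψ R R] [AddMonoidHomClass Ψ R R] {ψ : Ψ} (hψ : ∀ g, ∀ x ∈ 𝒜 g, ψ x ∈ 𝒜 g)
    {v : R} (hv : ∀ r, v * r = ψ r * v) (g : ι) (r : R) :
    (decompose 𝒜 v g : R) * r = ψ r * decompose 𝒜 v g := by
  induction r using Decomposition.inductionOn 𝒜 with
  | zero => simp
  | @homogeneous h x =>
    have hcomp := congr_arg (fun y => (decompose 𝒜 y (g + h) : R)) (hv x)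
    simp only at hcomp
    rwa [coe_decompose_mul_add_of_right_mem 𝒜 x.2, add_comm g h,
      coe_decompose_mul_add_of_left_mem 𝒜 (hψ h x x.2)] at hcomp
  | add a b ha hb => simp only [mul_add, map_add, add_mul, ha, hb]

end GradedRing

section GradedAlgebra

variable {G : Type*} [AddCommGroup G] [DecidableEq G] {F : Type*} [Field F]
  {R : Type*} [Ring R] [Algebra F R] {ℬ : G → Submodule F R} [GradedAlgebra ℬ]

theorem mem_homogeneousUnits_iff {u : Rˣ} :
    u ∈ homogeneousUnits ℬ ↔ ∃ g, (u : R) ∈ ℬ g :=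
  ⟨fun ⟨g, hg, _⟩ => ⟨g, hg⟩,
    fun ⟨g, hg⟩ => ⟨g, hg, mem_neg_of_mul_eq_one ℬ hg u.mul_inv u.inv_mul⟩⟩

theorem innerAlgAut_mem_of_mem_homogeneousUnits {u : Rˣ} (hu : u ∈ homogeneousUnits ℬ)
    {h : G} {x : R} (hx : x ∈ ℬ h) : innerAlgAut F u x ∈ ℬ h := by
  obtain ⟨g, hg, hg'⟩ := hu
  simpa [innerAlgAut_apply] using
    SetLike.mul_mem_graded (SetLike.mul_mem_graded hg hx) hg'

theorem IsGradedSimple.nontrivial (hsimple : IsGradedSimple ℬ) : Nontrivial R := by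
  obtain ⟨x, y, hxy⟩ := hsimple.1
  exact ⟨⟨x, 0, by rintro rfl; simp at hxy⟩⟩

theorem IsGradedSimple.isUnit_of_range_mul_eq (hsimple : IsGradedSimple ℬ) {w : R} {g : G}
    (hw : w ∈ ℬ g) (hw0 : w ≠ 0) (hnormal : Set.range (w * ·) = Set.range (· * w)) :
    IsUnit w := by
  let J : TwoSidedIdeal R := TwoSidedIdeal.mk' (Set.range (· * w)) ⟨0, zero_mul w⟩
    (by rintro _ _ ⟨a, rfl⟩ ⟨b, rfl⟩; exact ⟨a + b, add_mul a b w⟩)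
    (by rintro _ ⟨a, rfl⟩; exact ⟨-a, neg_mul a w⟩)
    (by rintro x _ ⟨a, rfl⟩; exact ⟨x * a, mul_assoc x a w⟩)
    (by
      rintro _ y ⟨a, rfl⟩
      obtain ⟨b, hb⟩ : w * y ∈ Set.range (· * w) := hnormal ▸ ⟨y, rfl⟩
      exact ⟨a * b, by simp only [mul_assoc, ← hb]⟩)
  have hJ : ∀ x, x ∈ J ↔ ∃ a, a * w = x := TwoSidedIdeal.mem_mk' _ _ _ _ _ _
  have hJgraded : ∀ x ∈ J, ∀ k : G, (decompose ℬ x k : R) ∈ J := by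
    rintro _ hx k
    obtain ⟨a, rfl⟩ := (hJ _).1 hx
    refine (hJ _).2 ⟨decompose ℬ a (k - g), ?_⟩
    rw [← coe_decompose_mul_add_of_right_mem ℬ hw, sub_add_cancel]
  have hJtop : J = ⊤ := (hsimple.2 J hJgraded).resolve_left fun hbot =>
    hw0 ((TwoSidedIdeal.mem_bot R).1 (hbot ▸ (hJ w).2 ⟨1, one_mul w⟩))
  obtain ⟨b, hbw⟩ := (hJ 1).1 (hJtop ▸ TwoSidedIdeal.mem_top R)
  obtain ⟨a, hwa⟩ : (1 : R) ∈ Set.range (w * ·) := hnormal ▸ ⟨b, hbw⟩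
  exact ⟨⟨w, a, hwa, left_inv_eq_right_inv hbw hwa ▸ hbw⟩, rfl⟩

theorem IsGradedSimple.exists_mem_homogeneousUnits_innerAlgAut_eq (hsimple : IsGradedSimple ℬ)
    {ψ : R ≃ₐ[F] R} {v : Rˣ} (hv : innerAlgAut F v = ψ) (hψ : ∀ g, ∀ x ∈ ℬ g, ψ x ∈ ℬ g) :
    ∃ u ∈ homogeneousUnits ℬ, innerAlgAut F u = ψ := by
  have := hsimple.nontrivial
  have hvψ : ∀ r, (v : R) * r = ψ r * v := fun r => by
    rw [← hv, innerAlgAut_apply, Units.inv_mul_cancel_right]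
  obtain ⟨g, hg⟩ := exists_coe_decompose_ne_zero ℬ v.ne_zero
  set w : R := ↑(decompose ℬ (v : R) g)
  have hw : w ∈ ℬ g := (decompose ℬ (v : R) g).2
  have hwψ : ∀ r, w * r = ψ r * w := coe_decompose_mul_eq_of_mul_eq ℬ hψ hvψ g
  have hnormal : Set.range (w * ·) = Set.range (· * w) := by
    rw [show (w * ·) = (· * w) ∘ ψ from funext hwψ, ψ.surjective.range_comp]
  have hunit := hsimple.isUnit_of_range_mul_eq hw hg hnormal
  refine ⟨hunit.unit, mem_homogeneousUnits_iff.2 ⟨g, hw⟩, ?_⟩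
  ext r
  rw [innerAlgAut_apply, Units.mul_inv_eq_iff_eq_mul, IsUnit.unit_spec, hwψ]

end GradedAlgebra

/-- For a graded-simple `G`-graded unital associative algebra (`G` abelian), the
group of inner automorphisms stabilizing the grading is isomorphic to
`R_hom^× / (Z(R) ∩ R_hom^×)`: there is a group homomorphism from the homogeneous
units onto the inner automorphisms stabilizing the grading, whose kernel consists
exactly of the central homogeneous units (first isomorphism theorem). -/
theorem inner_stabilizer_iso_homogeneousUnits_mod_center
    {G : Type*} [AddCommGroup G] [DecidableEq G]
    {F : Type*} [Field F] {R : Type*} [Ring R] [Algebra F R]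
    (ℬ : G → Submodule F R) [GradedAlgebra ℬ]
    (hsimple : IsGradedSimple ℬ) :
    ∃ φ : homogeneousUnits ℬ →* (R ≃ₐ[F] R),
      (∀ u : homogeneousUnits ℬ, ∀ r : R,
          (φ u) r = ((u : Rˣ) : R) * r * ((↑(u : Rˣ)⁻¹ : R))) ∧
      (∀ ψ : R ≃ₐ[F] R,
          ((∃ v : Rˣ, ∀ r : R, ψ r = (v : R) * r * (↑v⁻¹ : R)) ∧
            (∀ g : G, ∀ x ∈ ℬ g, ψ x ∈ ℬ g)) ↔ ∃ u, φ u = ψ) ∧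
      (∀ u : homogeneousUnits ℬ,
          φ u = 1 ↔ ∀ r : R, ((u : Rˣ) : R) * r = r * ((u : Rˣ) : R)) := by
  refine ⟨(innerAlgAut F).comp (homogeneousUnits ℬ).subtype, fun _ _ => rfl,
    fun ψ => ⟨?_, ?_⟩, fun u => innerAlgAut_eq_one_iff F (u : Rˣ)⟩
  · rintro ⟨⟨v, hv⟩, hψ⟩
    obtain ⟨u, hu, rfl⟩ := hsimple.exists_mem_homogeneousUnits_innerAlgAut_eq
      (AlgEquiv.ext fun r => (hv r).symm) hψ
    exact ⟨⟨u, hu⟩, rfl⟩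
  · rintro ⟨u, rfl⟩
    exact ⟨⟨u, fun _ => rfl⟩, fun _ _ hx => innerAlgAut_mem_of_mem_homogeneousUnits u.2 hx⟩
end

section
/- Consider the real algebra H × H (product of two quaternion algebras) graded by Z_2² × Z_2² via the decomposition H × H = [R(1,0) ⊕ R(0,1)] ⊕ R(i,0) ⊕ R(j,0) ⊕ R(k,0) ⊕ R(0,i) ⊕ R(0,j) ⊕ R(0,k). Then the element X = (i,i) is invertible, the inner automorphism Int X stabilizes this grading, but no nonzero homogeneous component of X is invertible. -/
open scoped Quaternion

noncomputable section

abbrev HxH : Type := ℍ[ℝ] × ℍ[ℝ]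

def qi : ℍ[ℝ] := ⟨0, 1, 0, 0⟩
def qj : ℍ[ℝ] := ⟨0, 0, 1, 0⟩
def qk : ℍ[ℝ] := ⟨0, 0, 0, 1⟩

/-- The `(ℤ₂² × ℤ₂²)`-grading on `ℍ × ℍ` of equation (1) of the paper. -/
def gradHxH : (ZMod 2 × ZMod 2) × (ZMod 2 × ZMod 2) → Submodule ℝ HxH := fun g =>
  if g = ((0, 0), (0, 0)) then Submodule.span ℝ {((1, 0) : HxH), ((0, 1) : HxH)}
  else if g = ((1, 0), (0, 0)) then Submodule.span ℝ {((qi, 0) : HxH)}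
  else if g = ((0, 1), (0, 0)) then Submodule.span ℝ {((qj, 0) : HxH)}
  else if g = ((1, 1), (0, 0)) then Submodule.span ℝ {((qk, 0) : HxH)}
  else if g = ((0, 0), (1, 0)) then Submodule.span ℝ {((0, qi) : HxH)}
  else if g = ((0, 0), (0, 1)) then Submodule.span ℝ {((0, qj) : HxH)}
  else if g = ((0, 0), (1, 1)) then Submodule.span ℝ {((0, qk) : HxH)}
  else ⊥

/-!
The grading of `ℍ × ℍ` is the product of two copies of the Pauli `ℤ₂²`-grading of `ℍ` by the
lines `ℝ1, ℝi, ℝj, ℝk`, the first supported on `ℤ₂² × {0}` and the second on `{0} × ℤ₂²`.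
In a graded algebra, `u z v` has degree `deg u + deg z + deg v`, so conjugating by a homogeneous
`u` with a homogeneous inverse of degree `-deg u` preserves degrees. Applying this in each factor
separately, `Int (i, i)` preserves every component of the product grading, although
`(i, i) = (i, 0) + (0, i)` is not homogeneous; its homogeneous components are zero divisors.
-/

namespace Submodule

variable {R M N ι : Type*} [Semiring R] [AddCommMonoid M] [Module R M] [AddCommMonoid N]
  [Module R N]

theorem span_singleton_inl (x : M) : R ∙ ((x, 0) : M × N) = (R ∙ x).prod ⊥ := by
  simpa using LinearMap.span_inl_union_inr (R := R) (s := {x}) (t := (∅ : Set N))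

theorem span_singleton_inr (y : N) : R ∙ ((0, y) : M × N) = (⊥ : Submodule R M).prod (R ∙ y) := by
  simpa using LinearMap.span_inl_union_inr (R := R) (s := (∅ : Set M)) (t := {y})

theorem span_pair_inl_inr (x : M) (y : N) :
    span R {((x, 0) : M × N), (0, y)} = (R ∙ x).prod (R ∙ y) := by
  rw [← LinearMap.span_inl_union_inr, Set.image_singleton, Set.image_singleton,
    Set.singleton_union]
  rfl

theorem disjoint_prod_prod {p p' : Submodule R M} {q q' : Submodule R N} (hp : Disjoint p p')
    (hq : Disjoint q q') : Disjoint (p.prod q) (p'.prod q') := by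
  rw [disjoint_def] at *
  intro x hx hx'
  exact Prod.ext (hp x.1 hx.1 hx'.1) (hq x.2 hx.2 hx'.2)

theorem iSupIndep_prod {p : ι → Submodule R M} {q : ι → Submodule R N} (hp : iSupIndep p)
    (hq : iSupIndep q) : iSupIndep fun i => (p i).prod (q i) := fun i =>
  (disjoint_prod_prod (hp i) (hq i)).mono_right <| iSup₂_le fun j hj =>
    prod_mono (le_iSup₂ (f := fun j (_ : j ≠ i) => p j) j hj)
      (le_iSup₂ (f := fun j (_ : j ≠ i) => q j) j hj)

theorem iSup_prod_prod (p : ι → Submodule R M) (q : ι → Submodule R N) :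
    ⨆ i, (p i).prod (q i) = (⨆ i, p i).prod (⨆ i, q i) := by
  refine le_antisymm (iSup_le fun i => prod_mono (le_iSup p i) (le_iSup q i)) ?_
  rw [LinearMap.prod_eq_sup_map, map_iSup, map_iSup]
  exact sup_le (iSup_mono fun i => by rw [map_inl]; exact prod_mono le_rfl bot_le)
    (iSup_mono fun i => by rw [map_inr]; exact prod_mono bot_le le_rfl)

end Submodule

theorem SetLike.gradedMul_span_singleton {ι R A : Type*} [Add ι] [CommSemiring R] [Semiring A]
    [Algebra R A] {v : ι → A} (h : ∀ i j, v i * v j ∈ R ∙ v (i + j)) :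
    SetLike.GradedMul fun i => R ∙ v i where
  mul_mem {i j} x y hx hy := by
    have hxy := Submodule.mul_mem_mul hx hy
    rw [Submodule.span_mul_span, Set.singleton_mul_singleton] at hxy
    exact (Submodule.span_singleton_le_iff_mem _ _).2 (h i j) hxy

section GradingInl

variable {R A ι κ : Type*} [Semiring R]

section Decomposition

variable [AddCommMonoid A] [Module R A] [Zero κ] [DecidableEq κ] (𝒜 : ι → Submodule R A)

def gradingInl (g : ι × κ) : Submodule R A :=
  if g.2 = 0 then 𝒜 g.1 else ⊥

@[simp]
theorem gradingInl_mk_zero (i : ι) : gradingInl 𝒜 (i, (0 : κ)) = 𝒜 i := if_pos rfl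

variable {𝒜}

theorem iSupIndep_gradingInl (h : iSupIndep 𝒜) : iSupIndep (gradingInl 𝒜 : ι × κ → _) := by
  intro g
  unfold gradingInl
  split_ifs with hg
  · refine (h g.1).mono_right (iSup₂_le fun j hj => ?_)
    split_ifs with hj0
    · exact le_iSup₂_of_le (f := fun i (_ : i ≠ g.1) => 𝒜 i) j.1
        (fun h1 => hj (Prod.ext h1 (hj0.trans hg.symm))) le_rfl
    · exact bot_le
  · exact disjoint_bot_left

theorem iSup_gradingInl : ⨆ g : ι × κ, gradingInl 𝒜 g = ⨆ i, 𝒜 i := by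
  refine le_antisymm (iSup_le fun g => ?_) (iSup_le fun i => ?_)
  · unfold gradingInl
    split_ifs
    exacts [le_iSup 𝒜 g.1, bot_le]
  · exact (gradingInl_mk_zero 𝒜 i).symm.le.trans (le_iSup (gradingInl 𝒜) (i, 0))

end Decomposition

variable [Semiring A] [Module R A] [DecidableEq κ] {𝒜 : ι → Submodule R A}

instance gradingInl.gradedMul [Add ι] [AddZeroClass κ] [SetLike.GradedMul 𝒜] :
    SetLike.GradedMul (gradingInl 𝒜 : ι × κ → _) where
  mul_mem {g h} x y hx hy := by
    unfold gradingInl at *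
    split_ifs at hx hy with hg hh
    · rw [if_pos (by rw [Prod.snd_add, hg, hh, add_zero])]
      exact SetLike.GradedMul.mul_mem hx hy
    all_goals simp_all

theorem mul_mul_mem_gradingInl [AddCommMonoid ι] [AddCommMonoid κ] [SetLike.GradedMul 𝒜]
    {u v z : A} {d e : ι} {g : ι × κ} (hu : u ∈ 𝒜 d) (hv : v ∈ 𝒜 e) (hde : d + e = 0)
    (hz : z ∈ gradingInl 𝒜 g) : u * z * v ∈ gradingInl 𝒜 g := by
  rw [← gradingInl_mk_zero (κ := κ) 𝒜] at hu hv
  have h := SetLike.GradedMul.mul_mem (SetLike.GradedMul.mul_mem hu hz) hv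
  have hdeg : (d, (0 : κ)) + g + (e, 0) = g :=
    Prod.ext (by rw [Prod.fst_add, Prod.fst_add, add_right_comm, hde, zero_add]) (by simp)
  rwa [hdeg] at h

end GradingInl

section ProdGrading

variable {R A B ι κ : Type*} [Semiring R] [DecidableEq ι] [DecidableEq κ]

section Decomposition

variable [AddCommMonoid A] [Module R A] [AddCommMonoid B] [Module R B] [Zero ι] [Zero κ]
  {𝒜 : ι → Submodule R A} {ℬ : κ → Submodule R B}

variable (𝒜 ℬ) in
def prodGrading (g : ι × κ) : Submodule R (A × B) :=
  (gradingInl 𝒜 g).prod (gradingInl ℬ g.swap)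

theorem mem_prodGrading {g : ι × κ} {x : A × B} :
    x ∈ prodGrading 𝒜 ℬ g ↔ x.1 ∈ gradingInl 𝒜 g ∧ x.2 ∈ gradingInl ℬ g.swap :=
  Submodule.mem_prod

theorem iSupIndep_prodGrading (h𝒜 : iSupIndep 𝒜) (hℬ : iSupIndep ℬ) :
    iSupIndep (prodGrading 𝒜 ℬ) :=
  Submodule.iSupIndep_prod (iSupIndep_gradingInl h𝒜)
    ((iSupIndep_gradingInl hℬ).comp Prod.swap_injective)

theorem iSup_prodGrading_eq_top (h𝒜 : ⨆ i, 𝒜 i = ⊤) (hℬ : ⨆ j, ℬ j = ⊤) :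
    ⨆ g, prodGrading 𝒜 ℬ g = ⊤ := by
  simp only [prodGrading]
  rw [Submodule.iSup_prod_prod, Prod.swap_surjective.iSup_comp (gradingInl ℬ),
    iSup_gradingInl, iSup_gradingInl, h𝒜, hℬ, Submodule.prod_top]

end Decomposition

variable [Semiring A] [Module R A] [Semiring B] [Module R B]
  {𝒜 : ι → Submodule R A} {ℬ : κ → Submodule R B}

instance prodGrading.gradedMul [AddMonoid ι] [AddMonoid κ] [SetLike.GradedMul 𝒜]
    [SetLike.GradedMul ℬ] : SetLike.GradedMul (prodGrading 𝒜 ℬ) where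
  mul_mem {g h} x y hx hy := by
    rw [mem_prodGrading] at *
    exact ⟨SetLike.GradedMul.mul_mem hx.1 hy.1,
      Prod.swap_add g h ▸ SetLike.GradedMul.mul_mem hx.2 hy.2⟩

theorem mul_mul_mem_prodGrading [AddCommMonoid ι] [AddCommMonoid κ] [SetLike.GradedMul 𝒜]
    [SetLike.GradedMul ℬ] {u v : A} {u' v' : B} {d e : ι} {d' e' : κ} {g : ι × κ} {z : A × B}
    (hu : u ∈ 𝒜 d) (hv : v ∈ 𝒜 e) (hde : d + e = 0) (hu' : u' ∈ ℬ d') (hv' : v' ∈ ℬ e')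
    (hde' : d' + e' = 0) (hz : z ∈ prodGrading 𝒜 ℬ g) :
    (u, u') * z * (v, v') ∈ prodGrading 𝒜 ℬ g := by
  rw [mem_prodGrading] at *
  exact ⟨mul_mul_mem_gradingInl hu hv hde hz.1, mul_mul_mem_gradingInl hu' hv' hde' hz.2⟩

end ProdGrading

theorem ZMod.prod_two_cases :
    ∀ a : ZMod 2 × ZMod 2, a = (0, 0) ∨ a = (1, 0) ∨ a = (0, 1) ∨ a = (1, 1) := by
  decide

namespace Quaternion

variable (R : Type*) [CommRing R]

def linearEquivTuple : ℍ[R] ≃ₗ[R] (Fin 4 → R) :=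
  { equivTuple R with
    map_add' := fun _ _ => by ext i; fin_cases i <;> rfl
    map_smul' := fun _ _ => by ext i; fin_cases i <;> rfl }

/-- `(a, b) ↦ a + 2 b`, so that `(1, 0), (0, 1), (1, 1)` index `i, j, k`. -/
def pauliIndex : ZMod 2 × ZMod 2 ≃ Fin 4 := (Equiv.prodComm _ _).trans finProdFinEquiv

@[simp] theorem pauliIndex_zero_zero : pauliIndex (0, 0) = 0 := rfl
@[simp] theorem pauliIndex_one_zero : pauliIndex (1, 0) = 1 := rfl
@[simp] theorem pauliIndex_zero_one : pauliIndex (0, 1) = 2 := rfl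
@[simp] theorem pauliIndex_one_one : pauliIndex (1, 1) = 3 := rfl

def pauliBasis : Module.Basis (ZMod 2 × ZMod 2) R ℍ[R] :=
  (Module.Basis.ofEquivFun (linearEquivTuple R)).reindex pauliIndex.symm

theorem pauliBasis_apply (a : ZMod 2 × ZMod 2) :
    pauliBasis R a = (equivTuple R).symm (Pi.single (pauliIndex a) 1) := by
  simp [pauliBasis, Module.Basis.coe_ofEquivFun, linearEquivTuple]
  rfl

@[simp]
theorem pauliBasis_repr (x : ℍ[R]) (a : ZMod 2 × ZMod 2) :
    (pauliBasis R).repr x a = ![x.re, x.imI, x.imJ, x.imK] (pauliIndex a) := rfl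

theorem pauliBasis_zero_zero : pauliBasis R (0, 0) = 1 := by
  ext <;> simp [pauliBasis_apply]

theorem pauliBasis_mul_mem (a b : ZMod 2 × ZMod 2) :
    pauliBasis R a * pauliBasis R b ∈ R ∙ pauliBasis R (a + b) := by
  rw [Submodule.mem_span_singleton]
  refine ⟨(pauliBasis R).repr (pauliBasis R a * pauliBasis R b) (a + b), ?_⟩
  -- Unfold the basis vectors only after `re_mul`, `imI_mul`, ... have fired: unfolded, they are
  -- structure literals of type `ℍ[R,-1,-1]`, not `ℍ[R]`, and `one_mul` and the like fail on them.
  rcases ZMod.prod_two_cases a with rfl | rfl | rfl | rfl <;>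
    rcases ZMod.prod_two_cases b with rfl | rfl | rfl | rfl <;>
    ext <;> simp [CharTwo.add_self_eq_zero] <;> simp [pauliBasis_apply]

def pauliGrading (a : ZMod 2 × ZMod 2) : Submodule R ℍ[R] := R ∙ pauliBasis R a

instance : SetLike.GradedMul (pauliGrading R) :=
  SetLike.gradedMul_span_singleton (pauliBasis_mul_mem R)

theorem iSupIndep_pauliGrading : iSupIndep (pauliGrading R) :=
  (pauliBasis R).linearIndependent.iSupIndep_span_singleton

theorem iSup_pauliGrading : ⨆ a, pauliGrading R a = ⊤ := by
  simp only [pauliGrading]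
  rw [← Submodule.span_range_eq_iSup, Module.Basis.span_eq]

end Quaternion

open Quaternion

theorem pauliBasis_one_zero_eq_qi : pauliBasis ℝ (1, 0) = qi := by
  ext <;> simp [pauliBasis_apply, qi]

theorem pauliBasis_zero_one_eq_qj : pauliBasis ℝ (0, 1) = qj := by
  ext <;> simp [pauliBasis_apply, qj]

theorem pauliBasis_one_one_eq_qk : pauliBasis ℝ (1, 1) = qk := by
  ext <;> simp [pauliBasis_apply, qk]

theorem gradHxH_eq_prodGrading : gradHxH = prodGrading (pauliGrading ℝ) (pauliGrading ℝ) := by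
  funext ⟨a, b⟩
  rcases ZMod.prod_two_cases a with rfl | rfl | rfl | rfl <;>
    rcases ZMod.prod_two_cases b with rfl | rfl | rfl | rfl <;>
    simp [gradHxH, prodGrading, gradingInl, pauliGrading, pauliBasis_zero_zero,
      pauliBasis_one_zero_eq_qi, pauliBasis_zero_one_eq_qj, pauliBasis_one_one_eq_qk,
      Submodule.span_singleton_inl, Submodule.span_singleton_inr, Submodule.span_pair_inl_inr]

theorem qi_mul_qi : qi * qi = -1 := by
  ext <;> simp <;> simp [qi]

/-- On `ℍ × ℍ` with the grading above (which is a grading: components multiply into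
the component of the sum of degrees and they decompose the algebra), the element
`X = (i, i)` is invertible (with inverse `(-i, -i)`), its inner automorphism
stabilizes the grading, but its nonzero homogeneous components `(i,0)` and `(0,i)`
are not invertible.  Hence the graded-simple hypothesis cannot be dropped. -/
theorem counterexample_HxH :
    (∀ a b : (ZMod 2 × ZMod 2) × (ZMod 2 × ZMod 2),
        ∀ x ∈ gradHxH a, ∀ y ∈ gradHxH b, x * y ∈ gradHxH (a + b)) ∧
    (⨆ a, gradHxH a) = ⊤ ∧
    iSupIndep gradHxH ∧
    (((qi, qi) : HxH) * ((-qi, -qi) : HxH) = 1 ∧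
      ((-qi, -qi) : HxH) * ((qi, qi) : HxH) = 1) ∧
    (∀ a : (ZMod 2 × ZMod 2) × (ZMod 2 × ZMod 2), ∀ Z ∈ gradHxH a,
        ((qi, qi) : HxH) * Z * ((-qi, -qi) : HxH) ∈ gradHxH a) ∧
    ((qi, (0 : ℍ[ℝ])) : HxH) ∈ gradHxH ((1, 0), (0, 0)) ∧
    (((0 : ℍ[ℝ]), qi) : HxH) ∈ gradHxH ((0, 0), (1, 0)) ∧
    ((qi, qi) : HxH) = ((qi, 0) : HxH) + ((0, qi) : HxH) ∧
    ¬ IsUnit ((qi, 0) : HxH) ∧ ¬ IsUnit (((0 : ℍ[ℝ]), qi) : HxH) := by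
  have hi : qi ∈ pauliGrading ℝ (1, 0) := by
    rw [pauliGrading, pauliBasis_one_zero_eq_qi]
    exact Submodule.mem_span_singleton_self qi
  have hdeg : ((1, 0) + (1, 0) : ZMod 2 × ZMod 2) = 0 := by decide
  have hright : qi * -qi = 1 := by rw [mul_neg, qi_mul_qi, neg_neg]
  have hleft : -qi * qi = 1 := by rw [neg_mul, qi_mul_qi, neg_neg]
  rw [gradHxH_eq_prodGrading]
  refine ⟨fun a b x hx y hy => SetLike.GradedMul.mul_mem hx hy,
    iSup_prodGrading_eq_top (iSup_pauliGrading ℝ) (iSup_pauliGrading ℝ),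
    iSupIndep_prodGrading (iSupIndep_pauliGrading ℝ) (iSupIndep_pauliGrading ℝ),
    ⟨Prod.ext hright hright, Prod.ext hleft hleft⟩,
    fun a Z hZ => mul_mul_mem_prodGrading hi (neg_mem hi) hdeg hi (neg_mem hi) hdeg hZ,
    mem_prodGrading.2 ⟨by rwa [Prod.mk_zero_zero, gradingInl_mk_zero], zero_mem _⟩,
    mem_prodGrading.2
      ⟨zero_mem _, by rwa [Prod.swap_prod_mk, Prod.mk_zero_zero, gradingInl_mk_zero]⟩,
    Prod.ext (add_zero qi).symm (zero_add qi).symm,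
    fun h => not_isUnit_zero (Prod.isUnit_iff.1 h).2,
    fun h => not_isUnit_zero (Prod.isUnit_iff.1 h).1⟩
end
end

section
/- Let G be an abelian group and D a G-graded-division algebra with support T. Consider the grading on M_k(D) determined by elements g_1,…,g_k ∈ G satisfying the fine condition. Then the universal abelian group of this grading is Z^{k-1} × T. -/
/-!
The homogeneous components of `M_k(D)` are the spaces `E i j ⊗ D_t`, of degree `g i - g j + t`
with `t ∈ T`. By the fine condition such a degree determines `t`, and off the diagonal also the
pair `(i, j)`, so sending it to `(e i - e j, t)`, with `e 0 = 0` and `e 1, …, e (k-1)` the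
standard basis of `ℤ^(k-1)`, is a well-defined degree map. A realization `f` of the grading is
additive on `T` and satisfies `f (g i - g j + t) = u i - u j + f t` with `u i = f (g i - g 0)`,
so it factors through `(v, t) ↦ ∑ m, v m • u (m + 1) + f t`, uniquely because
the degrees `g (m + 1) - g 0` and `t ∈ T` generate `ℤ^(k-1) × T`.
-/

/-- The grading on `M_k(D)`: `deg (E i j ⊗ d) = g i - g j + deg d`. -/
def MatGrading {G : Type*} [AddCommGroup G] {F : Type*} [Field F]
    {D : Type*} [Ring D] [Algebra F D]
    (k : ℕ) (g : Fin k → G) (𝒟 : G → Submodule F D) :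
    G → Submodule F (Matrix (Fin k) (Fin k) D) := fun a =>
  { carrier := {M | ∀ i j : Fin k, M i j ∈ 𝒟 (-(g i) + a + g j)}
    add_mem' := fun hM hN i j => (𝒟 _).add_mem (hM i j) (hN i j)
    zero_mem' := fun i j => (𝒟 _).zero_mem
    smul_mem' := fun c M hM i j => (𝒟 _).smul_mem c (hM i j) }

section Support

variable {G : Type*} [AddCommGroup G] {k : ℕ}

def IsSupported (g : Fin k → G) (T : AddSubgroup G) (a : G) : Prop :=
  ∃ i j, -(g i) + a + g j ∈ T

def IsSupportedMul (g : Fin k → G) (T : AddSubgroup G) (a b : G) : Prop :=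
  ∃ i j l, -(g i) + a + g j ∈ T ∧ -(g j) + b + g l ∈ T

def IsFine (g : Fin k → G) (T : AddSubgroup G) : Prop :=
  ∀ i j p q, i ≠ j → (i, j) ≠ (p, q) → g i - g j - (g p - g q) ∉ T

theorem IsFine.eq_or_eq {g : Fin k → G} {T : AddSubgroup G} (hg : IsFine g T) {a : G}
    {i j p q : Fin k} (hij : -(g i) + a + g j ∈ T) (hpq : -(g p) + a + g q ∈ T) :
    i = j ∧ p = q ∨ i = p ∧ j = q := by
  have hdiff : g i - g j - (g p - g q) ∈ T := by
    convert T.sub_mem hpq hij using 1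
    abel
  by_cases hi : i = j
  · by_cases hp : p = q
    · exact .inl ⟨hi, hp⟩
    · subst hi
      refine absurd ?_ (hg p q i i hp fun h => hp (by cases h; rfl))
      convert T.neg_mem hdiff using 1
      abel
  · by_cases hne : (i, j) = (p, q)
    · exact .inr (Prod.ext_iff.mp hne)
    · exact absurd hdiff (hg i j p q hi hne)

theorem AddSubgroup.neg_add_sub_add_mem (T : AddSubgroup G) (x y : G) : -x + (x - y) + y ∈ T := by
  convert T.zero_mem using 1
  abel

end Support

theorem Matrix.single_ne_zero {m n α : Type*} [DecidableEq m] [DecidableEq n] [Zero α]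
    {i : m} {j : n} {c : α} (hc : c ≠ 0) : Matrix.single i j c ≠ 0 :=
  fun h => hc (by simpa using congrFun (congrFun h i) j)

namespace MatGrading

variable {G : Type*} [AddCommGroup G] {F : Type*} [Field F] {D : Type*} [Ring D] [Algebra F D]
  {k : ℕ} {g : Fin k → G} {𝒟 : G → Submodule F D} {T : AddSubgroup G}

theorem single_mem {a : G} {i j : Fin k} {d : D} (hd : d ∈ 𝒟 (-(g i) + a + g j)) :
    Matrix.single i j d ∈ MatGrading k g 𝒟 a := by
  intro p q
  by_cases h : i = p ∧ j = q
  · obtain ⟨rfl, rfl⟩ := h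
    simpa using hd
  · simp [h]

theorem ne_bot_iff (hT : ∀ a, a ∈ T ↔ 𝒟 a ≠ ⊥) (a : G) :
    MatGrading k g 𝒟 a ≠ ⊥ ↔ IsSupported g T a := by
  simp only [Submodule.ne_bot_iff] at hT ⊢
  constructor
  · rintro ⟨M, hM, hM0⟩
    obtain ⟨i, j, hij⟩ : ∃ i j, M i j ≠ 0 := by
      by_contra! h
      exact hM0 (Matrix.ext h)
    exact ⟨i, j, (hT _).mpr ⟨_, hM i j, hij⟩⟩
  · rintro ⟨i, j, hij⟩
    obtain ⟨d, hd, hd0⟩ := (hT _).mp hij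
    exact ⟨_, single_mem hd, Matrix.single_ne_zero hd0⟩

theorem mul_ne_bot_iff (hT : ∀ a, a ∈ T ↔ 𝒟 a ≠ ⊥)
    (hdiv : ∀ a : G, ∀ d ∈ 𝒟 a, d ≠ 0 → IsUnit d) (a b : G) :
    MatGrading k g 𝒟 a * MatGrading k g 𝒟 b ≠ ⊥ ↔ IsSupportedMul g T a b := by
  simp only [Submodule.ne_bot_iff] at hT
  constructor
  · intro hab
    by_contra hnot
    refine hab (eq_bot_iff.mpr (Submodule.mul_le.mpr fun M hM N hN => ?_))
    rw [Submodule.mem_bot]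
    ext i l
    rw [Matrix.mul_apply, Matrix.zero_apply]
    refine Finset.sum_eq_zero fun j _ => by_contra fun hMN => hnot ⟨i, j, l, ?_, ?_⟩
    · exact (hT _).mpr ⟨_, hM i j, left_ne_zero_of_mul hMN⟩
    · exact (hT _).mpr ⟨_, hN j l, right_ne_zero_of_mul hMN⟩
  · rintro ⟨i, j, l, ha, hb⟩
    obtain ⟨d, hd, hd0⟩ := (hT _).mp ha
    obtain ⟨e, he, he0⟩ := (hT _).mp hb
    have hde : d * e ≠ 0 := fun h => he0 ((hdiv _ d hd hd0).mul_right_eq_zero.mp h)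
    refine (Submodule.ne_bot_iff _).mpr
      ⟨_, Submodule.mul_mem_mul (single_mem hd) (single_mem he), ?_⟩
    rw [Matrix.single_mul_single_same]
    exact Matrix.single_ne_zero hde

end MatGrading

theorem AddMonoidHom.ext_pi_single_one_prod {ι A H : Type*} [Fintype ι] [DecidableEq ι]
    [AddCommGroup A] [AddCommGroup H] {φ ψ : (ι → ℤ) × A →+ H}
    (h₁ : ∀ m, φ (Pi.single m 1, 0) = ψ (Pi.single m 1, 0))
    (h₂ : ∀ t, φ (0, t) = ψ (0, t)) :
    φ = ψ := by
  rw [← φ.coprod_unique, ← ψ.coprod_unique]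
  congr 1
  · refine AddMonoidHom.functions_ext _ _ _ fun m x => ?_
    have hx : ((Pi.single m x : ι → ℤ), (0 : A)) = x • (Pi.single m 1, 0) := by
      simp [← Pi.single_smul]
    simp only [AddMonoidHom.comp_apply, AddMonoidHom.inl_apply, hx, map_zsmul, h₁]
  · ext t
    exact h₂ t

section UniversalDegree

variable {G : Type*} [AddCommGroup G] {n : ℕ}

def indexCoord : Fin (n + 1) → Fin n → ℤ :=
  Fin.cases 0 fun m => Pi.single m 1

-- Off the support of the grading the value `0` is arbitrary.
open Classical in
noncomputable def universalDegree (g : Fin (n + 1) → G) (T : AddSubgroup G) (a : G) :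
    (Fin n → ℤ) × T :=
  if h : ∃ p : Fin (n + 1) × Fin (n + 1), -(g p.1) + a + g p.2 ∈ T then
    (indexCoord h.choose.1 - indexCoord h.choose.2, ⟨_, h.choose_spec⟩)
  else 0

variable {g : Fin (n + 1) → G} {T : AddSubgroup G}

theorem IsFine.mk_eq_mk (hg : IsFine g T) {a : G} {i j p q : Fin (n + 1)}
    (hij : -(g i) + a + g j ∈ T) (hpq : -(g p) + a + g q ∈ T) :
    ((indexCoord i - indexCoord j, ⟨_, hij⟩) : (Fin n → ℤ) × T) =
      (indexCoord p - indexCoord q, ⟨_, hpq⟩) := by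
  rcases hg.eq_or_eq hij hpq with ⟨rfl, rfl⟩ | ⟨rfl, rfl⟩
  · ext <;> simp
  · rfl

theorem universalDegree_eq (hg : IsFine g T) {a : G} {i j : Fin (n + 1)}
    (h : -(g i) + a + g j ∈ T) :
    universalDegree g T a = (indexCoord i - indexCoord j, ⟨_, h⟩) := by
  have hex : ∃ p : Fin (n + 1) × Fin (n + 1), -(g p.1) + a + g p.2 ∈ T := ⟨(i, j), h⟩
  rw [universalDegree, dif_pos hex]
  exact hg.mk_eq_mk hex.choose_spec h

theorem universalDegree_add (hg : IsFine g T) {a b : G} (hab : IsSupportedMul g T a b) :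
    universalDegree g T (a + b) = universalDegree g T a + universalDegree g T b := by
  obtain ⟨i, j, l, ha, hb⟩ := hab
  have hsum : -(g i) + (a + b) + g l ∈ T := by
    convert T.add_mem ha hb using 1
    abel
  rw [universalDegree_eq hg ha, universalDegree_eq hg hb, universalDegree_eq hg hsum]
  ext
  · simp
  · simp only [Prod.mk_add_mk, sub_add_sub_cancel, AddMemClass.mk_add_mk]
    abel

theorem universalDegree_coe (hg : IsFine g T) (t : T) : universalDegree g T t = (0, t) := by
  rw [universalDegree_eq hg (i := 0) (j := 0) (by simp)]
  ext <;> simp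

theorem universalDegree_sub_zero (hg : IsFine g T) (m : Fin n) :
    universalDegree g T (g m.succ - g 0) = (Pi.single m 1, 0) := by
  rw [universalDegree_eq hg (T.neg_add_sub_add_mem (g m.succ) (g 0))]
  ext
  · simp [indexCoord]
  · simp only [ZeroMemClass.coe_zero]
    abel

end UniversalDegree

section Realization

variable {G H : Type*} [AddCommGroup G] [AddCommGroup H] {n : ℕ}

def IsRealization (g : Fin (n + 1) → G) (T : AddSubgroup G) (f : G → H) : Prop :=
  ∀ a b, IsSupportedMul g T a b → f (a + b) = f a + f b

variable {g : Fin (n + 1) → G} {T : AddSubgroup G} {f : G → H}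

namespace IsRealization

theorem map_add_of_mem (hf : IsRealization g T f) {s t : G} (hs : s ∈ T) (ht : t ∈ T) :
    f (s + t) = f s + f t :=
  hf s t ⟨0, 0, 0, by rwa [neg_add_cancel_comm], by rwa [neg_add_cancel_comm]⟩

theorem map_zero (hf : IsRealization g T f) : f 0 = 0 := by
  simpa using hf.map_add_of_mem T.zero_mem T.zero_mem

theorem map_sub_add_map_sub (hf : IsRealization g T f) (i j l : Fin (n + 1)) :
    f (g i - g j) + f (g j - g l) = f (g i - g l) := by
  rw [← hf _ _ ⟨i, j, l, T.neg_add_sub_add_mem _ _, T.neg_add_sub_add_mem _ _⟩,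
    sub_add_sub_cancel]

theorem map_eq_map_sub_add (hf : IsRealization g T f) {a : G} {i j : Fin (n + 1)}
    (h : -(g i) + a + g j ∈ T) : f a = f (g i - g j) + f (-(g i) + a + g j) := by
  rw [← hf _ _ ⟨i, j, j, T.neg_add_sub_add_mem _ _, by rwa [neg_add_cancel_comm]⟩]
  congr 1
  abel

noncomputable def lift (hf : IsRealization g T f) : (Fin n → ℤ) × T →+ H :=
  (Fintype.linearCombination ℤ fun m => f (g m.succ - g 0)).toAddMonoidHom.coprod
    (AddMonoidHom.mk' (fun t : T => f t) fun s t => hf.map_add_of_mem s.2 t.2)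

theorem lift_indexCoord (hf : IsRealization g T f) (i : Fin (n + 1)) :
    hf.lift (indexCoord i, 0) = f (g i - g 0) := by
  cases i using Fin.cases <;> simp [lift, indexCoord, hf.map_zero]

theorem lift_zero_mk (hf : IsRealization g T f) (t : T) : hf.lift (0, t) = f t := by
  simp [lift]

theorem map_eq_lift_universalDegree (hf : IsRealization g T f) (hg : IsFine g T) {a : G}
    (ha : IsSupported g T a) : f a = hf.lift (universalDegree g T a) := by
  obtain ⟨i, j, h⟩ := ha
  have hsplit : ((indexCoord i - indexCoord j, ⟨_, h⟩) : (Fin n → ℤ) × T) =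
      (indexCoord i, 0) - (indexCoord j, 0) + (0, ⟨_, h⟩) := by
    simp
  rw [universalDegree_eq hg h, hsplit, map_add, map_sub, lift_indexCoord, lift_indexCoord,
    lift_zero_mk, hf.map_eq_map_sub_add h, ← hf.map_sub_add_map_sub i j 0]
  abel

end IsRealization

theorem universalDegree_hom_ext (hg : IsFine g T) {φ ψ : (Fin n → ℤ) × T →+ H}
    (h : ∀ a, IsSupported g T a → φ (universalDegree g T a) = ψ (universalDegree g T a)) :
    φ = ψ := by
  refine AddMonoidHom.ext_pi_single_one_prod (fun m => ?_) (fun t => ?_)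
  · rw [← universalDegree_sub_zero hg]
    exact h _ ⟨m.succ, 0, T.neg_add_sub_add_mem _ _⟩
  · rw [← universalDegree_coe hg]
    exact h _ ⟨0, 0, by rw [neg_add_cancel_comm]; exact t.2⟩

end Realization

theorem universal_group_of_matrix_grading_general
    {G : Type*} [AddCommGroup G] {F : Type*} [Field F]
    {D : Type*} [Ring D] [Algebra F D]
    (k : ℕ) (hk : 0 < k) (g : Fin k → G) (𝒟 : G → Submodule F D)
    (hdiv : ∀ a : G, ∀ d ∈ 𝒟 a, d ≠ 0 → IsUnit d)
    (T : AddSubgroup G) (hT : ∀ a : G, a ∈ T ↔ 𝒟 a ≠ ⊥)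
    (hfine : ∀ i j h l : Fin k, i ≠ j → (i, j) ≠ (h, l) →
      𝒟 (g i - g j - (g h - g l)) = ⊥) :
    ∃ δ : G → (Fin (k - 1) → ℤ) × T,
      (∀ a b : G, MatGrading k g 𝒟 a * MatGrading k g 𝒟 b ≠ ⊥ →
        δ (a + b) = δ a + δ b) ∧
      ∀ (H : Type) [inst : AddCommGroup H] (f : G → H),
        (∀ a b : G, MatGrading k g 𝒟 a * MatGrading k g 𝒟 b ≠ ⊥ →
          f (a + b) = f a + f b) →
        ∃! φ : ((Fin (k - 1) → ℤ) × T) →+ H,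
          ∀ a : G, MatGrading k g 𝒟 a ≠ ⊥ → f a = φ (δ a) := by
  obtain ⟨n, rfl⟩ : ∃ n, k = n + 1 := ⟨k - 1, by omega⟩
  have hg : IsFine g T := fun i j p q hij hne hmem => (hT _).mp hmem (hfine i j p q hij hne)
  simp only [MatGrading.ne_bot_iff hT, MatGrading.mul_ne_bot_iff hT hdiv]
  refine ⟨universalDegree g T, fun a b => universalDegree_add hg,
    fun H _ f (hf : IsRealization g T f) => ?_⟩
  refine ⟨hf.lift, fun a => hf.map_eq_lift_universalDegree hg, fun ψ hψ => ?_⟩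
  exact universalDegree_hom_ext hg fun a ha => by
    rw [← hψ a ha, ← hf.map_eq_lift_universalDegree hg ha]

/-- Let `D` be a `G`-graded-division algebra (`G` abelian) with support the subgroup
`T`, and grade `R = M_k(D)` by degrees `g 1, …, g k` satisfying the fine condition.
Then the universal abelian group of this grading is `ℤ^(k-1) × T`: there is a degree
map `δ` from `G` to `ℤ^(k-1) × T`, additive on pairs of degrees whose components
multiply nontrivially, such that every such "realization" of the grading over an
abelian group `H` factors uniquely through a homomorphism `ℤ^(k-1) × T →+ H`. -/
theorem universal_group_of_matrix_grading
    {G : Type*} [AddCommGroup G] {F : Type*} [Field F]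
    {D : Type*} [Ring D] [Algebra F D]
    (k : ℕ) (hk : 0 < k) (g : Fin k → G) (𝒟 : G → Submodule F D)
    (hone : (1 : D) ∈ 𝒟 0)
    (hmul : ∀ a b : G, ∀ x ∈ 𝒟 a, ∀ y ∈ 𝒟 b, x * y ∈ 𝒟 (a + b))
    (hdiv : ∀ a : G, ∀ d ∈ 𝒟 a, d ≠ 0 → IsUnit d)
    (T : AddSubgroup G) (hT : ∀ a : G, a ∈ T ↔ 𝒟 a ≠ ⊥)
    (hfine : ∀ i j h l : Fin k, i ≠ j → (i, j) ≠ (h, l) →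
      𝒟 (g i - g j - (g h - g l)) = ⊥) :
    ∃ δ : G → (Fin (k - 1) → ℤ) × T,
      (∀ a b : G, MatGrading k g 𝒟 a * MatGrading k g 𝒟 b ≠ ⊥ →
        δ (a + b) = δ a + δ b) ∧
      ∀ (H : Type) [inst : AddCommGroup H] (f : G → H),
        (∀ a b : G, MatGrading k g 𝒟 a * MatGrading k g 𝒟 b ≠ ⊥ →
          f (a + b) = f a + f b) →
        ∃! φ : ((Fin (k - 1) → ℤ) × T) →+ H,
          ∀ a : G, MatGrading k g 𝒟 a ≠ ⊥ → f a = φ (δ a) :=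
  universal_group_of_matrix_grading_general k hk g 𝒟 hdiv T hT hfine
end

section
/- Let G be an abelian group, R a G-graded associative algebra that is graded-simple and satisfies the DCC on graded left ideals, so R ≅ M_k(D) graded via degrees g_1,…,g_k and a graded-division algebra D with support T. The grading Γ on R is fine in the class of abelian group gradings if and only if (κ,γ) satisfy the fine condition and the division grading Γ_0 on D is fine in the class of abelian group gradings. -/
/-- `ℬ'` is a grading of `R` by the abelian group `H`: components multiply into the
component of the sum of degrees, contain the unity in degree `0`, and decompose `R`
as a direct sum. -/
def IsGrading {H : Type*} [AddCommGroup H]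
    {F : Type*} [Field F] {R : Type*} [Ring R] [Algebra F R]
    (ℬ' : H → Submodule F R) : Prop :=
  (∀ a b : H, ∀ x ∈ ℬ' a, ∀ y ∈ ℬ' b, x * y ∈ ℬ' (a + b)) ∧
    (1 : R) ∈ ℬ' 0 ∧ iSupIndep ℬ' ∧ (⨆ a, ℬ' a) = ⊤

/-- `ℬ'` refines `ℬ` if each nonzero component of `ℬ'` is contained in a component
of `ℬ`. -/
def IsRefinement {H : Type*} {G : Type*}
    {F : Type*} [Field F] {R : Type*} [Ring R] [Algebra F R]
    (ℬ' : H → Submodule F R) (ℬ : G → Submodule F R) : Prop :=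
  ∀ h : H, ℬ' h ≠ ⊥ → ∃ a : G, ℬ' h ≤ ℬ a

/-- A grading is fine in the class of abelian group gradings if every refinement of
it by an abelian group grading is not proper, i.e. has the same homogeneous
components. -/
def IsFineGrading {G : Type*} [AddCommGroup G]
    {F : Type*} [Field F] {R : Type*} [Ring R] [Algebra F R]
    (ℬ : G → Submodule F R) : Prop :=
  ∀ (H : Type) [inst : AddCommGroup H] (ℬ' : H → Submodule F R),
    IsGrading ℬ' → IsRefinement ℬ' ℬ → IsRefinement ℬ ℬ'

/-!
If `Γ` is fine, two refinements show the conditions are necessary: a refinement of the grading of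
`D` by `H` gives one of `M_k(D)` by `H × G`, with the degrees `(0, g i)`; and if `d ≠ 0` has degree
`g i - g j - (g h - g l)`, then `E_ij` and `E_hl ⊗ d` lie in the same component of `Γ` but are
separated by the grading by `G × ℤᵏ` in which row `p` gets the extra degree `e p`.

Conversely, since the support of `D` is a group, the fine condition makes every nonzero component
of `Γ` either a single off-diagonal block `E_ij ⊗ D_c` or a diagonal `⨁ᵢ E_ii ⊗ D_a`. In a
refinement of `Γ`, the block `E_ij ⊗ D_0` contains a homogeneous `E_ij ⊗ w` with `w` invertible;
multiplying the components of `E_ii` by these forces `E_ii` to have degree `0`. Then each corner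
`E_ii ⊗ D` carries a grading refining that of `D`, hence equal to it by fineness, and multiplying
by the `E_ij ⊗ w` shows that the blocks of each component of `Γ` share one degree.
-/

open DirectSum Matrix

section Decomposition

variable {ι M σ : Type*} [DecidableEq ι] [AddCommMonoid M] [SetLike σ M]
  [AddSubmonoidClass σ M] (ℳ : ι → σ) [Decomposition ℳ]

theorem DirectSum.mem_of_decompose_eq_zero {x : M} {i : ι}
    (h : ∀ j ≠ i, (decompose ℳ x j : M) = 0) : x ∈ ℳ i := by
  classical
  rw [← sum_support_decompose ℳ x]
  refine sum_mem fun j _ => ?_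
  obtain rfl | hj := eq_or_ne j i
  · exact (decompose ℳ x j).2
  · rw [h j hj]
    exact zero_mem _

theorem DirectSum.exists_decompose_ne_zero {x : M} (hx : x ≠ 0) :
    ∃ i, (decompose ℳ x i : M) ≠ 0 := by
  classical
  by_contra! h
  rw [← sum_support_decompose ℳ x, Finset.sum_eq_zero fun i _ => h i] at hx
  exact hx rfl

end Decomposition

section Grading

variable {H : Type*} [AddCommGroup H] {F : Type*} [Field F] {R : Type*} [Ring R] [Algebra F R]
  {ℬ : H → Submodule F R}

theorem IsGrading.mul_mem (hℬ : IsGrading ℬ) {a b : H} {x y : R} (hx : x ∈ ℬ a)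
    (hy : y ∈ ℬ b) : x * y ∈ ℬ (a + b) :=
  hℬ.1 a b x hx y hy

theorem IsGrading.one_mem (hℬ : IsGrading ℬ) : (1 : R) ∈ ℬ 0 := hℬ.2.1

theorem IsGrading.independent (hℬ : IsGrading ℬ) : iSupIndep ℬ := hℬ.2.2.1

theorem IsGrading.iSup_eq_top (hℬ : IsGrading ℬ) : ⨆ a, ℬ a = ⊤ := hℬ.2.2.2

theorem IsGrading.eq_of_mem_of_mem (hℬ : IsGrading ℬ) {a b : H} {x : R} (ha : x ∈ ℬ a)
    (hb : x ∈ ℬ b) (hx : x ≠ 0) : a = b := by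
  by_contra hab
  exact hx (Submodule.disjoint_def.mp (hℬ.independent.pairwiseDisjoint hab) x ha hb)

theorem IsGrading.zero_ne_bot [Nontrivial R] (hℬ : IsGrading ℬ) : ℬ 0 ≠ ⊥ :=
  (Submodule.ne_bot_iff _).mpr ⟨1, hℬ.one_mem, one_ne_zero⟩

noncomputable abbrev IsGrading.gradedAlgebra [DecidableEq H] (hℬ : IsGrading ℬ) :
    GradedAlgebra ℬ :=
  { ((isInternal_submodule_iff_iSupIndep_and_iSup_eq_top ℬ).mpr
      ⟨hℬ.independent, hℬ.iSup_eq_top⟩).chooseDecomposition with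
    one_mem := hℬ.one_mem
    mul_mem := fun _ _ _ _ => hℬ.mul_mem }

theorem IsGrading.inv_mem (hℬ : IsGrading ℬ) {t : H} (u : Rˣ) (hu : (u : R) ∈ ℬ t) :
    (↑u⁻¹ : R) ∈ ℬ (-t) := by
  classical
  let := hℬ.gradedAlgebra
  refine mem_of_decompose_eq_zero ℬ fun j hj => ?_
  have hj' : (0 : H) ≠ j + t := fun h => hj (eq_neg_of_add_eq_zero_left h.symm)
  have h := coe_decompose_mul_add_of_right_mem ℬ (a := (↑u⁻¹ : R)) (i := j) hu
  rw [Units.inv_mul, decompose_of_mem_ne ℬ hℬ.one_mem hj'] at h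
  exact (Units.mul_left_eq_zero u).mp h.symm

end Grading

theorem IsRefinement.isHomogeneous {F R G H : Type*} [Field F] [Ring R] [Algebra F R]
    [AddCommGroup G] [DecidableEq H] {ℬ : H → Submodule F R} [Decomposition ℬ]
    {𝒜 : G → Submodule F R} (h𝒜 : IsGrading 𝒜) (href : IsRefinement ℬ 𝒜) (a : G) :
    SetLike.IsHomogeneous ℬ (𝒜 a) := by
  classical
  let := h𝒜.gradedAlgebra
  have proj_mem : ∀ {h : H} {y : R}, y ∈ ℬ h → (decompose 𝒜 y a : R) ∈ ℬ h := by
    intro h y hy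
    by_cases hbot : ℬ h = ⊥
    · rw [hbot, Submodule.mem_bot] at hy
      simp [hy]
    obtain ⟨b, hb⟩ := href h hbot
    obtain rfl | hba := eq_or_ne b a
    · rwa [decompose_of_mem_same 𝒜 (hb hy)]
    · rw [decompose_of_mem_ne 𝒜 (hb hy) hba]
      exact zero_mem _
  have proj_comm : ∀ x h, (decompose ℬ (decompose 𝒜 x a : R) h : R) =
      decompose 𝒜 (decompose ℬ x h : R) a := by
    intro x h
    induction x using DirectSum.Decomposition.inductionOn ℬ with
    | zero => simp
    | @homogeneous h' y =>
      obtain rfl | hne := eq_or_ne h' h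
      · rw [decompose_of_mem_same ℬ y.2, decompose_of_mem_same ℬ (proj_mem y.2)]
      · rw [decompose_of_mem_ne ℬ y.2 hne, decompose_of_mem_ne ℬ (proj_mem y.2) hne]
        simp
    | add x y hx hy => simp [hx, hy]
  intro h x hx
  have := proj_comm x h
  rw [decompose_of_mem_same 𝒜 hx] at this
  rw [this]
  exact (decompose 𝒜 _ a).2

section Construction

variable {F : Type*} [Field F] {R : Type*} [Ring R] [Algebra F R]

theorem IsGrading.prod {G H : Type*} [AddCommGroup G] [AddCommGroup H]
    {𝒜 : G → Submodule F R} {ℬ : H → Submodule F R} (h𝒜 : IsGrading 𝒜) (hℬ : IsGrading ℬ)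
    (href : IsRefinement 𝒜 ℬ) : IsGrading fun p : G × H => 𝒜 p.1 ⊓ ℬ p.2 := by
  refine ⟨fun a b x hx y hy => ⟨h𝒜.mul_mem hx.1 hy.1, hℬ.mul_mem hx.2 hy.2⟩,
    ⟨h𝒜.one_mem, hℬ.one_mem⟩, ?_, ?_⟩
  · have snd_eq : ∀ p : G × H, 𝒜 p.1 ⊓ ℬ p.2 ≠ ⊥ → ∀ b, 𝒜 p.1 ≤ ℬ b → b = p.2 := by
      intro p hp b hb
      obtain ⟨x, hx, hx0⟩ := Submodule.exists_mem_ne_zero_of_ne_bot hp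
      exact hℬ.eq_of_mem_of_mem (hb hx.1) hx.2 hx0
    have fst_injective : Function.Injective fun p : {p : G × H // 𝒜 p.1 ⊓ ℬ p.2 ≠ ⊥} => p.1.1 := by
      rintro ⟨p, hp⟩ ⟨q, hq⟩ (hpq : p.1 = q.1)
      obtain ⟨b, hb⟩ := href p.1 (ne_bot_of_le_ne_bot hp inf_le_left)
      have hp2 := snd_eq p hp b hb
      have hq2 := snd_eq q hq b (hpq ▸ hb)
      exact Subtype.ext (Prod.ext hpq (hp2.symm.trans hq2))
    exact iSupIndep_ne_bot.mp
      ((h𝒜.independent.comp fst_injective).mono fun _ => inf_le_left)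
  · rw [eq_top_iff, ← h𝒜.iSup_eq_top]
    refine iSup_le fun a => ?_
    by_cases ha : 𝒜 a = ⊥
    · simp [ha]
    obtain ⟨b, hb⟩ := href a ha
    exact le_iSup_of_le (f := fun p : G × H => 𝒜 p.1 ⊓ ℬ p.2) (a, b) (le_inf le_rfl hb)

theorem isGrading_ite_eq_zero {Z : Type*} [AddCommGroup Z] [DecidableEq Z] :
    IsGrading fun v : Z => if v = 0 then (⊤ : Submodule F R) else ⊥ := by
  refine ⟨fun a b x hx y hy => ?_, by simp, fun v => ?_, ?_⟩
  · by_cases ha : a = 0 <;> by_cases hb : b = 0 <;> simp_all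
  · by_cases hv : v = 0
    · subst hv
      simp +contextual
    · simp [hv]
  · exact eq_top_iff.mpr (le_iSup_of_le 0 (by simp))

theorem iSupIndep_of_le_comap {K ι κ M N : Type*} [Semiring K] [AddCommMonoid M] [Module K M]
    [AddCommMonoid N] [Module K N] {S : ι → Submodule K M} {T : κ → ι → Submodule K N}
    (f : κ → M →ₗ[K] N) (hf : ∀ x, (∀ c, f c x = 0) → x = 0) (hT : ∀ c, iSupIndep (T c))
    (hST : ∀ c a, S a ≤ (T c a).comap (f c)) : iSupIndep S := by
  intro a
  rw [Submodule.disjoint_def]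
  intro x hxa hx
  refine hf x fun c => Submodule.disjoint_def.mp (hT c a) _ (hST c a hxa) ?_
  have hle : ⨆ (b) (_ : b ≠ a), S b ≤ (⨆ (b) (_ : b ≠ a), T c b).comap (f c) :=
    iSup₂_le fun b hb => (hST c b).trans
      (Submodule.comap_mono (le_iSup₂ (f := fun b (_ : b ≠ a) => T c b) b hb))
  exact hle hx

end Construction

structure IsGradedDivision {G : Type*} [AddCommGroup G] {F : Type*} [Field F] {D : Type*} [Ring D]
    [Algebra F D] (𝒟 : G → Submodule F D) : Prop where
  isGrading : IsGrading 𝒟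
  isUnit : ∀ a, ∀ d ∈ 𝒟 a, d ≠ 0 → IsUnit d

section GradedDivision

variable {G : Type*} [AddCommGroup G] {F : Type*} [Field F] {D : Type*} [Ring D] [Algebra F D]
  {𝒟 : G → Submodule F D}

theorem IsGradedDivision.sub_ne_bot (h𝒟 : IsGradedDivision 𝒟) {s t : G} (hs : 𝒟 s ≠ ⊥)
    (ht : 𝒟 t ≠ ⊥) : 𝒟 (s - t) ≠ ⊥ := by
  obtain ⟨x, hx, hx0⟩ := Submodule.exists_mem_ne_zero_of_ne_bot hs
  obtain ⟨y, hy, hy0⟩ := Submodule.exists_mem_ne_zero_of_ne_bot ht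
  obtain ⟨u, rfl⟩ := h𝒟.isUnit t y hy hy0
  rw [sub_eq_add_neg, Submodule.ne_bot_iff]
  exact ⟨x * ↑u⁻¹, h𝒟.isGrading.mul_mem hx (h𝒟.isGrading.inv_mem u hy),
    (Units.mul_left_eq_zero _).not.mpr hx0⟩

end GradedDivision

theorem Matrix.single_eq_zero_iff {m n α : Type*} [DecidableEq m] [DecidableEq n] [Zero α]
    {i : m} {j : n} {c : α} : single i j c = 0 ↔ c = 0 :=
  ⟨fun h => by simpa using congr_fun₂ h i j, fun h => h ▸ single_zero i j⟩

section MatGrading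

variable {G : Type*} [AddCommGroup G] {F : Type*} [Field F] {D : Type*} [Ring D] [Algebra F D]
  {k : ℕ} {g : Fin k → G} {𝒟 : G → Submodule F D}

theorem single_mem_matGrading_iff {a : G} {i j : Fin k} {x : D} :
    single i j x ∈ MatGrading k g 𝒟 a ↔ x ∈ 𝒟 (-(g i) + a + g j) := by
  refine ⟨fun h => by simpa using h i j, fun h p q => ?_⟩
  by_cases hpq : i = p ∧ j = q
  · obtain ⟨rfl, rfl⟩ := hpq
    simpa using h
  · rw [single_apply_of_ne _ _ _ _ _ hpq]
    exact zero_mem _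

theorem single_mem_matGrading_iff_of_eq {a : G} {i : Fin k} {x : D} :
    single i i x ∈ MatGrading k g 𝒟 a ↔ x ∈ 𝒟 a := by
  rw [single_mem_matGrading_iff, neg_add_cancel_comm]

theorem isRefinement_matGrading {G' : Type*} [AddCommGroup G'] {g' : Fin k → G'}
    {𝒟' : G' → Submodule F D} (φ : G' →+ G) (h𝒟 : ∀ a, 𝒟' a ≤ 𝒟 (φ a))
    (hg : ∀ i, φ (g' i) = g i) : IsRefinement (MatGrading k g' 𝒟') (MatGrading k g 𝒟) :=
  fun a _ => ⟨φ a, fun M hM i j => by simpa [hg] using h𝒟 _ (hM i j)⟩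

theorem isGrading_matGrading (h𝒟 : IsGrading 𝒟) : IsGrading (MatGrading k g 𝒟) := by
  refine ⟨fun a b M hM N hN i j => ?_, fun i j => ?_, ?_, ?_⟩
  · rw [mul_apply]
    refine sum_mem fun r _ => ?_
    convert h𝒟.mul_mem (hM i r) (hN r j) using 2
    abel
  · rw [one_apply]
    split_ifs with h
    · subst h
      simpa using h𝒟.one_mem
    · exact zero_mem _
  · refine iSupIndep_of_le_comap (fun p : Fin k × Fin k => entryLinearMap F D p.1 p.2)
      (fun M hM => ext fun i j => hM (i, j)) (fun p => h𝒟.independent.comp ?_)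
      fun p a M hM => hM p.1 p.2
    exact fun a b h => by simpa using h
  · rw [eq_top_iff]
    rintro M -
    rw [matrix_eq_sum_single M]
    refine sum_mem fun i _ => sum_mem fun j _ => ?_
    have hM : M i j ∈ ⨆ c, 𝒟 c := h𝒟.iSup_eq_top ▸ Submodule.mem_top
    refine Submodule.iSup_induction _ (motive := fun d => single i j d ∈ ⨆ a, MatGrading k g 𝒟 a)
      hM (fun c d hd => ?_) (by simp) fun d e hd he => ?_
    · refine Submodule.mem_iSup_of_mem (g i + c - g j) (single_mem_matGrading_iff.mpr ?_)
      convert hd using 2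
      abel
    · rw [single_add]
      exact add_mem hd he

variable {H : Type*} {ℬ : H → Submodule F (Matrix (Fin k) (Fin k) D)}

theorem isGrading_comap_single [AddCommGroup H] (hℬ : IsGrading ℬ) {i : Fin k}
    (hE : single i i (1 : D) ∈ ℬ 0) :
    IsGrading fun h => (ℬ h).comap (singleLinearMap F i i) := by
  refine ⟨fun a b x hx y hy => ?_, hE, ?_, ?_⟩
  · simpa using hℬ.mul_mem hx hy
  · exact iSupIndep_of_le_comap (fun _ : Unit => singleLinearMap F i i)
      (fun x hx => by simpa using congr_fun₂ (hx ()) i i) (fun _ => hℬ.independent)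
      fun _ _ => le_rfl
  · rw [eq_top_iff]
    intro d _
    have hE_mul_mul : ∀ h, ∀ y ∈ ℬ h, single i i (y i i) ∈ ℬ h := by
      intro h y hy
      simpa using hℬ.mul_mem (hℬ.mul_mem hE hy) hE
    have hdiag : ∀ y ∈ ⨆ h, ℬ h, y i i ∈ ⨆ h, (ℬ h).comap (singleLinearMap F i i) := by
      intro y hy
      refine Submodule.iSup_induction _
        (motive := fun y => y i i ∈ ⨆ h, (ℬ h).comap (singleLinearMap F i i)) hy
        (fun h y hy => ?_) (by simp) fun _ _ => add_mem
      exact Submodule.mem_iSup_of_mem h (by simpa using hE_mul_mul h y hy)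
    simpa using hdiag (single i i d) (hℬ.iSup_eq_top ▸ Submodule.mem_top)

theorem isRefinement_comap_single (href : IsRefinement ℬ (MatGrading k g 𝒟)) (i : Fin k) :
    IsRefinement (fun h => (ℬ h).comap (singleLinearMap F i i)) 𝒟 := by
  intro h hh
  obtain ⟨d, hd, hd0⟩ := Submodule.exists_mem_ne_zero_of_ne_bot hh
  have hℬh : ℬ h ≠ ⊥ := by
    rw [Submodule.ne_bot_iff]
    exact ⟨single i i d, hd, single_eq_zero_iff.not.mpr hd0⟩
  obtain ⟨a, ha⟩ := href h hℬh
  exact ⟨a, fun x hx => single_mem_matGrading_iff_of_eq.mp (ha hx)⟩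

end MatGrading

def FineCondition {G : Type*} [AddCommGroup G] {F : Type*} [Field F] {D : Type*} [Ring D]
    [Algebra F D] {k : ℕ} (g : Fin k → G) (𝒟 : G → Submodule F D) : Prop :=
  ∀ i j h l : Fin k, i ≠ j → (i, j) ≠ (h, l) → 𝒟 (g i - g j - (g h - g l)) = ⊥

section FineCondition

variable {G : Type*} [AddCommGroup G] {F : Type*} [Field F] {D : Type*} [Ring D] [Algebra F D]
  {k : ℕ} {g : Fin k → G} {𝒟 : G → Submodule F D}

theorem FineCondition.eq_of_ne_bot (hfc : FineCondition g 𝒟) (h𝒟 : IsGradedDivision 𝒟)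
    {a : G} {i j p q : Fin k} (hij : i ≠ j) (hi : 𝒟 (-(g i) + a + g j) ≠ ⊥)
    (hp : 𝒟 (-(g p) + a + g q) ≠ ⊥) : (p, q) = (i, j) := by
  by_contra hne
  apply h𝒟.sub_ne_bot hp hi
  convert hfc i j p q hij (Ne.symm hne) using 2
  abel

theorem FineCondition.eq_single_of_mem (hfc : FineCondition g 𝒟) (h𝒟 : IsGradedDivision 𝒟)
    {a : G} {i j : Fin k} (hij : i ≠ j) (hi : 𝒟 (-(g i) + a + g j) ≠ ⊥)
    {M : Matrix (Fin k) (Fin k) D} (hM : M ∈ MatGrading k g 𝒟 a) : M = single i j (M i j) := by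
  ext p q
  by_cases hpq : (p, q) = (i, j)
  · obtain ⟨rfl, rfl⟩ := Prod.mk.inj hpq
    simp
  · rw [single_apply_of_ne _ _ _ _ _ fun h => hpq (by rw [h.1, h.2])]
    by_contra h0
    exact hpq (hfc.eq_of_ne_bot h𝒟 hij hi (Submodule.ne_bot_iff _ |>.mpr ⟨_, hM p q, h0⟩))

theorem FineCondition.apply_eq_zero_of_mem (hfc : FineCondition g 𝒟) (h𝒟 : IsGradedDivision 𝒟)
    {a : G} (ha : 𝒟 a ≠ ⊥) {M : Matrix (Fin k) (Fin k) D} (hM : M ∈ MatGrading k g 𝒟 a)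
    {p q : Fin k} (hpq : p ≠ q) : M p q = 0 := by
  by_contra h0
  have hq : 𝒟 (-(g q) + a + g q) ≠ ⊥ := by rwa [neg_add_cancel_comm]
  have := hfc.eq_of_ne_bot h𝒟 hpq (Submodule.ne_bot_iff _ |>.mpr ⟨_, hM p q, h0⟩) hq
  exact hpq (Prod.mk.inj this).1.symm

theorem FineCondition.eq_diagonal_of_mem (hfc : FineCondition g 𝒟) (h𝒟 : IsGradedDivision 𝒟)
    {a : G} (ha : 𝒟 a ≠ ⊥) {M : Matrix (Fin k) (Fin k) D} (hM : M ∈ MatGrading k g 𝒟 a) :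
    M = ∑ r, single r r (M r r) := by
  rw [sum_single_eq_diagonal]
  ext p q
  obtain rfl | hpq := eq_or_ne p q
  · simp
  · rw [diagonal_apply_ne _ hpq, hfc.apply_eq_zero_of_mem h𝒟 ha hM hpq]

end FineCondition

section Refinement

variable {G : Type*} [AddCommGroup G] {F : Type*} [Field F] {D : Type*} [Ring D] [Algebra F D]
  {k : ℕ} {g : Fin k → G} {𝒟 : G → Submodule F D}
  {H : Type*} [AddCommGroup H] {ℬ : H → Submodule F (Matrix (Fin k) (Fin k) D)}

theorem IsGrading.single_mem_of_unit_mul (h𝒟 : IsGrading 𝒟) (hℬ : IsGrading ℬ) {i j : Fin k}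
    {c₀ : H} {w : Dˣ} (hw : (w : D) ∈ 𝒟 0) (hwℬ : single i j (w : D) ∈ ℬ c₀) {c : G} {h : H}
    (hj : ∀ d ∈ 𝒟 c, single j j d ∈ ℬ h) {d : D} (hd : d ∈ 𝒟 c) : single i j d ∈ ℬ (c₀ + h) := by
  have hwd : ↑w⁻¹ * d ∈ 𝒟 c := by simpa using h𝒟.mul_mem (h𝒟.inv_mem w hw) hd
  simpa using hℬ.mul_mem hwℬ (hj _ hwd)

theorem IsGrading.single_mem_of_mul_unit (h𝒟 : IsGrading 𝒟) (hℬ : IsGrading ℬ) {i j : Fin k}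
    {c₀ : H} {w : Dˣ} (hw : (w : D) ∈ 𝒟 0) (hwℬ : single i j (w : D) ∈ ℬ c₀) {c : G} {h : H}
    (hi : ∀ d ∈ 𝒟 c, single i i d ∈ ℬ h) {d : D} (hd : d ∈ 𝒟 c) : single i j d ∈ ℬ (h + c₀) := by
  have hdw : d * ↑w⁻¹ ∈ 𝒟 c := by simpa using h𝒟.mul_mem hd (h𝒟.inv_mem w hw)
  simpa using hℬ.mul_mem (hi _ hdw) hwℬ

variable [Nontrivial D]

theorem FineCondition.exists_single_unit_mem (hfc : FineCondition g 𝒟) (h𝒟 : IsGradedDivision 𝒟)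
    (hℬ : IsGrading ℬ) (href : IsRefinement ℬ (MatGrading k g 𝒟)) {i j : Fin k} (hij : i ≠ j) :
    ∃ (c : H) (w : Dˣ), (w : D) ∈ 𝒟 0 ∧ single i j (w : D) ∈ ℬ c := by
  classical
  let := hℬ.gradedAlgebra
  have hdeg : -(g i) + (g i - g j) + g j = 0 := by abel
  have hE : single i j (1 : D) ∈ MatGrading k g 𝒟 (g i - g j) := by
    rw [single_mem_matGrading_iff, hdeg]
    exact h𝒟.isGrading.one_mem
  obtain ⟨c, hc⟩ := exists_decompose_ne_zero ℬ (single_eq_zero_iff.not.mpr one_ne_zero)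
  set y : Matrix (Fin k) (Fin k) D := ↑(decompose ℬ (single i j (1 : D)) c)
  have hy : y ∈ MatGrading k g 𝒟 (g i - g j) :=
    href.isHomogeneous (isGrading_matGrading h𝒟.isGrading) _ c hE
  have hsupp : 𝒟 (-(g i) + (g i - g j) + g j) ≠ ⊥ := by
    rw [hdeg]
    exact h𝒟.isGrading.zero_ne_bot
  have hy_eq := hfc.eq_single_of_mem h𝒟 hij hsupp hy
  have hw : y i j ∈ 𝒟 0 := hdeg ▸ hy i j
  have hw0 : y i j ≠ 0 := fun h0 => hc (by rw [hy_eq, h0, single_zero])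
  obtain ⟨w, hw'⟩ := h𝒟.isUnit 0 _ hw hw0
  refine ⟨c, w, hw' ▸ hw, ?_⟩
  rw [hw', ← hy_eq]
  exact (decompose ℬ _ c).2

theorem FineCondition.single_one_mem_zero (hfc : FineCondition g 𝒟) (h𝒟 : IsGradedDivision 𝒟)
    (hℬ : IsGrading ℬ) (href : IsRefinement ℬ (MatGrading k g 𝒟)) (i : Fin k) :
    single i i (1 : D) ∈ ℬ 0 := by
  classical
  rcases subsingleton_or_nontrivial (Fin k) with hk | hk
  · convert hℬ.one_mem
    ext p q
    rw [Subsingleton.elim p i, Subsingleton.elim q i]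
    simp
  let := hℬ.gradedAlgebra
  refine mem_of_decompose_eq_zero ℬ fun h hh => ?_
  have hE : single i i (1 : D) ∈ MatGrading k g 𝒟 0 :=
    single_mem_matGrading_iff_of_eq.mpr h𝒟.isGrading.one_mem
  set x : Matrix (Fin k) (Fin k) D := ↑(decompose ℬ (single i i (1 : D)) h) with hx_def
  have hx : x ∈ MatGrading k g 𝒟 0 :=
    href.isHomogeneous (isGrading_matGrading h𝒟.isGrading) 0 h hE
  rw [hfc.eq_diagonal_of_mem h𝒟 h𝒟.isGrading.zero_ne_bot hx]
  refine Finset.sum_eq_zero fun r _ => ?_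
  obtain ⟨q, hqr⟩ := exists_ne r
  obtain ⟨c, w, -, hw⟩ := hfc.exists_single_unit_mem h𝒟 hℬ href hqr.symm
  -- `x * single r q w` is the `(h + c)`-component of `single i i 1 * single r q w ∈ ℬ c`
  have hprod : single i i (1 : D) * single r q (w : D) ∈ ℬ c := by
    obtain rfl | hir := eq_or_ne i r
    · simpa using hw
    · rw [single_mul_single_of_ne _ _ _ _ hir]
      exact zero_mem _
  have hshift : x * single r q (w : D) = 0 := by
    rw [hx_def, ← coe_decompose_mul_add_of_right_mem ℬ hw,
      decompose_of_mem_ne ℬ hprod (by simpa using hh)]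
  have hxr : x r r * w = 0 := by simpa using congr_fun₂ hshift r q
  rw [(Units.mul_left_eq_zero w).mp hxr, single_zero]

end Refinement

section Backward

variable {G : Type*} [AddCommGroup G] {F : Type*} [Field F] {D : Type*} [Ring D] [Algebra F D]
  [Nontrivial D] {k : ℕ} {g : Fin k → G} {𝒟 : G → Submodule F D}
  {H : Type} [AddCommGroup H] {ℬ : H → Submodule F (Matrix (Fin k) (Fin k) D)}

theorem FineCondition.exists_single_diag_mem (hfc : FineCondition g 𝒟)
    (h𝒟 : IsGradedDivision 𝒟) (hfine : IsFineGrading 𝒟) (hℬ : IsGrading ℬ)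
    (href : IsRefinement ℬ (MatGrading k g 𝒟)) (i : Fin k) {c : G} (hc : 𝒟 c ≠ ⊥) :
    ∃ h, ∀ d ∈ 𝒟 c, single i i d ∈ ℬ h := by
  obtain ⟨h, hh⟩ := hfine H _ (isGrading_comap_single hℬ (hfc.single_one_mem_zero h𝒟 hℬ href i))
    (isRefinement_comap_single href i) c hc
  exact ⟨h, fun d hd => by simpa using hh hd⟩

theorem FineCondition.exists_single_mem (hfc : FineCondition g 𝒟) (h𝒟 : IsGradedDivision 𝒟)
    (hfine : IsFineGrading 𝒟) (hℬ : IsGrading ℬ) (href : IsRefinement ℬ (MatGrading k g 𝒟))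
    (i j : Fin k) {c : G} (hc : 𝒟 c ≠ ⊥) : ∃ h, ∀ d ∈ 𝒟 c, single i j d ∈ ℬ h := by
  obtain rfl | hij := eq_or_ne i j
  · exact hfc.exists_single_diag_mem h𝒟 hfine hℬ href i hc
  obtain ⟨c₀, w, hw, hwℬ⟩ := hfc.exists_single_unit_mem h𝒟 hℬ href hij
  obtain ⟨h, hh⟩ := hfc.exists_single_diag_mem h𝒟 hfine hℬ href j hc
  exact ⟨c₀ + h, fun d => h𝒟.isGrading.single_mem_of_unit_mul hℬ hw hwℬ hh⟩

theorem FineCondition.eq_of_single_diag_mem (hfc : FineCondition g 𝒟) (h𝒟 : IsGradedDivision 𝒟)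
    (hℬ : IsGrading ℬ) (href : IsRefinement ℬ (MatGrading k g 𝒟)) {i j : Fin k} {c : G}
    (hc : 𝒟 c ≠ ⊥) {h h' : H} (hi : ∀ d ∈ 𝒟 c, single i i d ∈ ℬ h)
    (hj : ∀ d ∈ 𝒟 c, single j j d ∈ ℬ h') : h = h' := by
  obtain ⟨d, hd, hd0⟩ := Submodule.exists_mem_ne_zero_of_ne_bot hc
  have hd0' : single i j d ≠ 0 := single_eq_zero_iff.not.mpr hd0
  obtain rfl | hij := eq_or_ne i j
  · exact hℬ.eq_of_mem_of_mem (hi d hd) (hj d hd) hd0'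
  obtain ⟨c₀, w, hw, hwℬ⟩ := hfc.exists_single_unit_mem h𝒟 hℬ href hij
  have := hℬ.eq_of_mem_of_mem (h𝒟.isGrading.single_mem_of_mul_unit hℬ hw hwℬ hi hd)
    (h𝒟.isGrading.single_mem_of_unit_mul hℬ hw hwℬ hj hd) hd0'
  rwa [add_comm, add_left_cancel_iff] at this

theorem FineCondition.isRefinement (hfc : FineCondition g 𝒟) (h𝒟 : IsGradedDivision 𝒟)
    (hfine : IsFineGrading 𝒟) (hℬ : IsGrading ℬ) (href : IsRefinement ℬ (MatGrading k g 𝒟)) :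
    IsRefinement (MatGrading k g 𝒟) ℬ := by
  intro a ha
  obtain ⟨M, hM, hM0⟩ := Submodule.exists_mem_ne_zero_of_ne_bot ha
  obtain ⟨p, q, hpq⟩ : ∃ p q, M p q ≠ 0 := by
    by_contra! h
    exact hM0 (ext h)
  have hsupp : 𝒟 (-(g p) + a + g q) ≠ ⊥ := (Submodule.ne_bot_iff _).mpr ⟨_, hM p q, hpq⟩
  obtain rfl | hne := eq_or_ne p q
  · rw [neg_add_cancel_comm] at hsupp
    obtain ⟨h, hh⟩ := hfc.exists_single_diag_mem h𝒟 hfine hℬ href p hsupp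
    refine ⟨h, fun N hN => ?_⟩
    rw [hfc.eq_diagonal_of_mem h𝒟 hsupp hN]
    refine sum_mem fun r _ => ?_
    obtain ⟨h', hh'⟩ := hfc.exists_single_diag_mem h𝒟 hfine hℬ href r hsupp
    rw [hfc.eq_of_single_diag_mem h𝒟 hℬ href hsupp hh hh']
    exact hh' _ (by simpa using hN r r)
  · obtain ⟨h, hh⟩ := hfc.exists_single_mem h𝒟 hfine hℬ href p q hsupp
    exact ⟨h, fun N hN => hfc.eq_single_of_mem h𝒟 hne hsupp hN ▸ hh _ (hN p q)⟩

theorem FineCondition.isFineGrading_matGrading (hfc : FineCondition g 𝒟)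
    (h𝒟 : IsGradedDivision 𝒟) (hfine : IsFineGrading 𝒟) : IsFineGrading (MatGrading k g 𝒟) :=
  fun _ _ _ hℬ href => hfc.isRefinement h𝒟 hfine hℬ href

end Backward

section Forward

variable {G : Type} [AddCommGroup G] {F : Type*} [Field F] {D : Type*} [Ring D] [Algebra F D]
  {k : ℕ} {g : Fin k → G} {𝒟 : G → Submodule F D}

theorem fineCondition_of_isFineGrading_matGrading [Nontrivial D] (h𝒟 : IsGrading 𝒟)
    (hfine : IsFineGrading (MatGrading k g 𝒟)) : FineCondition g 𝒟 := by
  classical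
  intro i j h l hij hne
  by_contra hbot
  obtain ⟨d, hd, hd0⟩ := Submodule.exists_mem_ne_zero_of_ne_bot hbot
  let T : (Fin k → ℤ) → Submodule F D := fun v => if v = 0 then ⊤ else ⊥
  let e : Fin k → Fin k → ℤ := fun p => Pi.single p 1
  have h𝒟T : IsGrading fun p : G × (Fin k → ℤ) => 𝒟 p.1 ⊓ T p.2 :=
    h𝒟.prod isGrading_ite_eq_zero fun _ _ => ⟨0, by simp [T]⟩
  have href : IsRefinement (MatGrading k (fun p => (g p, e p)) fun p => 𝒟 p.1 ⊓ T p.2)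
      (MatGrading k g 𝒟) :=
    isRefinement_matGrading (AddMonoidHom.fst _ _) (fun _ => inf_le_left) fun _ => rfl
  have hdeg : -(g i) + (g i - g j) + g j = 0 := by abel
  have hE : single i j (1 : D) ∈ MatGrading k g 𝒟 (g i - g j) := by
    rw [single_mem_matGrading_iff, hdeg]
    exact h𝒟.one_mem
  obtain ⟨⟨b, v⟩, hle⟩ := hfine _ _ (isGrading_matGrading h𝒟T) href (g i - g j)
    ((Submodule.ne_bot_iff _).mpr ⟨_, hE, single_eq_zero_iff.not.mpr one_ne_zero⟩)
  have hv : ∀ p q (x : D), x ≠ 0 → single p q x ∈ MatGrading k g 𝒟 (g i - g j) →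
      -(e p) + v + e q = 0 := by
    intro p q x hx hmem
    have hT : x ∈ T (-(e p) + v + e q) := (single_mem_matGrading_iff.mp (hle hmem)).2
    by_contra hv
    exact hx (by simpa [T, hv] using hT)
  have hhl : single h l d ∈ MatGrading k g 𝒟 (g i - g j) := by
    rw [single_mem_matGrading_iff]
    convert hd using 2
    abel
  have he : e i + e l = e h + e j := by
    linear_combination hv h l d hd0 hhl - hv i j 1 one_ne_zero hE
  rcases (Pi.single_add_single_eq_single_add_single one_ne_zero one_ne_zero).mp he with
    ⟨rfl, rfl⟩ | ⟨-, rfl, -⟩ | ⟨h2, -⟩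
  · exact hne rfl
  · exact hij rfl
  · norm_num at h2

theorem isFineGrading_of_isFineGrading_matGrading (hk : 0 < k) (h𝒟 : IsGrading 𝒟)
    (hfine : IsFineGrading (MatGrading k g 𝒟)) : IsFineGrading 𝒟 := by
  intro H _ ℬ hℬ href c hc
  let i₀ : Fin k := ⟨0, hk⟩
  obtain ⟨d, hd, hd0⟩ := Submodule.exists_mem_ne_zero_of_ne_bot hc
  have hΓc : MatGrading k g 𝒟 c ≠ ⊥ := (Submodule.ne_bot_iff _).mpr
    ⟨single i₀ i₀ d, single_mem_matGrading_iff_of_eq.mpr hd, single_eq_zero_iff.not.mpr hd0⟩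
  obtain ⟨⟨h, b⟩, hle⟩ := hfine _ _ (isGrading_matGrading (g := fun i => ((0 : H), g i))
    (hℬ.prod h𝒟 href)) (isRefinement_matGrading (AddMonoidHom.snd _ _) (fun _ => inf_le_right)
    fun _ => rfl) c hΓc
  exact ⟨h, fun x hx =>
    (single_mem_matGrading_iff_of_eq.mp (hle (single_mem_matGrading_iff_of_eq (i := i₀).mpr hx))).1⟩

end Forward

/-- Let `G` be an abelian group and `R = M_k(D)` a graded matrix algebra over a
`G`-graded-division algebra `D` (this is the general graded-simple algebra
satisfying the DCC on graded left ideals).  The grading `Γ` on `R` is fine in the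
class of abelian group gradings if and only if the degrees `g 1, …, g k` satisfy the
fine condition and the division grading `Γ₀` on `D` is fine in the class of abelian
group gradings. -/
theorem matrix_grading_fine_iff
    {G : Type} [AddCommGroup G] {F : Type} [Field F]
    {D : Type} [Ring D] [Algebra F D] [Nontrivial D]
    (k : ℕ) (hk : 0 < k) (g : Fin k → G) (𝒟 : G → Submodule F D)
    (hgrading : IsGrading 𝒟)
    (hdiv : ∀ a : G, ∀ d ∈ 𝒟 a, d ≠ 0 → IsUnit d) :
    IsFineGrading (MatGrading k g 𝒟) ↔
      ((∀ i j h l : Fin k, i ≠ j → (i, j) ≠ (h, l) →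
          𝒟 (g i - g j - (g h - g l)) = ⊥) ∧
        IsFineGrading 𝒟) :=
  ⟨fun hfine => ⟨fineCondition_of_isFineGrading_matGrading hgrading hfine,
      isFineGrading_of_isFineGrading_matGrading hk hgrading hfine⟩,
    fun ⟨hfc, hfine⟩ => FineCondition.isFineGrading_matGrading hfc ⟨hgrading, hdiv⟩ hfine⟩
end

section
/- Let T be a finite abelian group, β : T × T → C^× a nondegenerate alternating bicharacter (rad β = {e}), and D a T-graded real algebra with one-dimensional complex components satisfying X_u X_v = β(u,v) X_v X_u for homogeneous X_u ∈ D_u, X_v ∈ D_v (a division grading of type (2-f) on M_n(C) viewed as a real algebra). If β ≠ β̄ (β is not real-valued), then every automorphism of D stabilizing the grading is inner, and the stabilizer of the grading is isomorphic to Hom(T, C^×) ≅ T. -/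
/-!
Every homogeneous component is a complex line `ℂ X_t` with `X_t` invertible, and conjugation
by `X_u⁻¹` multiplies `𝒟 t` by `β t u`. An automorphism `ψ` stabilizing the grading preserves the centre `𝒟 0 = ℂ`, so it is
`ℂ`-linear or `ℂ`-antilinear; applied to `X_u X_v = β(u,v) X_v X_u`, antilinearity would force
`β = β̄`. Hence `ψ` is `ℂ`-linear and multiplies each `𝒟 t` by a scalar `χ t`, where `χ` is a
character of `T`. Nondegeneracy of `β` and counting make `u ↦ β(·, u)` a bijection from `T` onto
its characters, so `χ = β(·, u)` for some `u`, and `ψ` agrees with conjugation by `X_u⁻¹` on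
every component, hence everywhere.
-/

open ComplexConjugate

theorem Submodule.exists_smul_eq_of_finrank_real_eq_two {V : Type*} [AddCommGroup V]
    [Module ℂ V] {p : Submodule ℝ V} (hp : Module.finrank ℝ p = 2)
    (hsmul : ∀ (c : ℂ), ∀ x ∈ p, c • x ∈ p) {X : V} (hX : X ∈ p) (hX0 : X ≠ 0) {y : V}
    (hy : y ∈ p) : ∃ c : ℂ, c • X = y := by
  have : FiniteDimensional ℝ p := Module.finite_of_finrank_eq_succ hp
  let f : ℂ →ₗ[ℝ] p :=
    { toFun := fun c => ⟨c • X, hsmul c X hX⟩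
      map_add' := fun a b => by ext; exact add_smul a b X
      map_smul' := fun r c => by ext; exact smul_assoc r c X }
  have hf : Function.Injective f := fun a b h => smul_left_injective ℂ hX0 congr($h.1)
  obtain ⟨c, hc⟩ := (LinearMap.injective_iff_surjective_of_finrank_eq_finrank
    (by rw [Complex.finrank_real_complex, hp])).mp hf ⟨y, hy⟩
  exact ⟨c, congr($hc.1)⟩

theorem AlgEquiv.complex_linear_or_antilinear {A : Type*} [Ring A] [Algebra ℂ A] [Nontrivial A]
    (ψ : A ≃ₐ[ℝ] A) (hI : ψ (algebraMap ℂ A Complex.I) ∈ Set.range (algebraMap ℂ A)) :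
    (∀ (c : ℂ) (x : A), ψ (c • x) = c • ψ x) ∨
      (∀ (c : ℂ) (x : A), ψ (c • x) = conj c • ψ x) := by
  obtain ⟨z, hz⟩ := hI
  have hz2 : z ^ 2 = Complex.I ^ 2 := by
    apply (algebraMap ℂ A).injective
    rw [map_pow, hz, ← map_pow, ← map_pow, Complex.I_sq, map_neg, map_one, map_neg, map_one]
  have hψ : ∀ (c : ℂ) (x : A), ψ (c • x) = (c.re + c.im * z) • ψ x := by
    intro c x
    have hc : c • x = c.re • x + c.im • (algebraMap ℂ A Complex.I * x) := by
      rw [← Algebra.smul_def, ← Complex.coe_smul, ← Complex.coe_smul, smul_smul, ← add_smul,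
        Complex.re_add_im]
    rw [hc, map_add, map_smul, map_smul, map_mul, ← hz, ← Algebra.smul_def, ← Complex.coe_smul,
      ← Complex.coe_smul, smul_smul, ← add_smul]
  rcases sq_eq_sq_iff_eq_or_eq_neg.mp hz2 with rfl | rfl
  · exact Or.inl fun c x => by rw [hψ, Complex.re_add_im]
  · exact Or.inr fun c x => by rw [hψ]; congr 1; apply Complex.ext <;> simp

section

variable {T A : Type*} [AddCommGroup T] [Ring A] [Algebra ℂ A]

def rightDual (β : T → T → ℂˣ) (hβ₁ : ∀ u v w : T, β (u + v) w = β u w * β v w)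
    (hβ₂ : ∀ u v w : T, β u (v + w) = β u v * β u w) : T →+ (T →+ Additive ℂˣ) :=
  AddMonoidHom.mk' (fun u => AddMonoidHom.mk' (fun t => .ofMul (β t u)) fun t s => hβ₁ t s u)
    fun u v => AddMonoidHom.ext fun t => congrArg Additive.ofMul (hβ₂ t u v)

theorem card_addMonoidHom_additive_units_complex [Finite T] :
    Nat.card (T →+ Additive ℂˣ) = Nat.card T := by
  have : NeZero (Monoid.exponent (Multiplicative T) : ℂ) :=
    ⟨Nat.cast_ne_zero.mpr Monoid.exponent_ne_zero_of_finite⟩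
  rw [Nat.card_congr AddMonoidHom.toMultiplicativeLeft,
    CommGroup.card_monoidHom_of_hasEnoughRootsOfUnity, Nat.card_congr Multiplicative.toAdd]

theorem rightDual_bijective [Finite T] {β : T → T → ℂˣ}
    (hβ₁ : ∀ u v w : T, β (u + v) w = β u w * β v w)
    (hβ₂ : ∀ u v w : T, β u (v + w) = β u v * β u w)
    (hβnondeg : ∀ t : T, (∀ u : T, β u t = 1) → t = 0) :
    Function.Bijective (rightDual β hβ₁ hβ₂) := by
  have hinj : Function.Injective (rightDual β hβ₁ hβ₂) :=
    (injective_iff_map_eq_zero _).mpr fun u hu => hβnondeg u fun t => congr($hu t)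
  have : Finite (T →+ Additive ℂˣ) := Nat.finite_of_card_ne_zero <| by
    rw [card_addMonoidHom_additive_units_complex]; exact Nat.card_pos.ne'
  exact (Nat.bijective_iff_injective_and_card _).mpr
    ⟨hinj, card_addMonoidHom_additive_units_complex.symm⟩

structure IsGradingOfType2f (𝒟 : T → Submodule ℝ A) (β : T → T → ℂˣ) : Prop where
  mul_mem : ∀ u v : T, ∀ x ∈ 𝒟 u, ∀ y ∈ 𝒟 v, x * y ∈ 𝒟 (u + v)
  iSup_eq_top : ⨆ t, 𝒟 t = ⊤
  finrank_eq_two : ∀ t, Module.finrank ℝ (𝒟 t) = 2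
  coe_zero_eq_range : (𝒟 0 : Set A) = Set.range (algebraMap ℂ A)
  mul_eq_smul_mul : ∀ u v : T, ∀ X ∈ 𝒟 u, ∀ Y ∈ 𝒟 v, X * Y = (β u v : ℂ) • (Y * X)

def ActsByCharacter (𝒟 : T → Submodule ℝ A) (ψ : A ≃ₐ[ℝ] A) (χ : T →+ Additive ℂˣ) : Prop :=
  ∀ t, ∀ x ∈ 𝒟 t, ψ x = ((χ t).toMul : ℂ) • x

namespace IsGradingOfType2f

variable {𝒟 : T → Submodule ℝ A} {β : T → T → ℂˣ}

theorem algebraMap_mem (h𝒟 : IsGradingOfType2f 𝒟 β) (c : ℂ) : algebraMap ℂ A c ∈ 𝒟 0 := by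
  rw [← SetLike.mem_coe, h𝒟.coe_zero_eq_range]
  exact ⟨c, rfl⟩

theorem smul_mem (h𝒟 : IsGradingOfType2f 𝒟 β) {t : T} (c : ℂ) {x : A} (hx : x ∈ 𝒟 t) :
    c • x ∈ 𝒟 t := by
  simpa [Algebra.smul_def] using h𝒟.mul_mem 0 t _ (h𝒟.algebraMap_mem c) x hx

theorem exists_ne_zero (h𝒟 : IsGradingOfType2f 𝒟 β) (t : T) : ∃ x ∈ 𝒟 t, x ≠ 0 :=
  Submodule.exists_mem_ne_zero_of_ne_bot fun h => by
    have := h𝒟.finrank_eq_two t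
    rw [h, finrank_bot] at this
    omega

theorem exists_smul_eq (h𝒟 : IsGradingOfType2f 𝒟 β) {t : T} {X : A} (hX : X ∈ 𝒟 t)
    (hX0 : X ≠ 0) {y : A} (hy : y ∈ 𝒟 t) : ∃ c : ℂ, c • X = y :=
  Submodule.exists_smul_eq_of_finrank_real_eq_two (h𝒟.finrank_eq_two t)
    (fun c _ hx => h𝒟.smul_mem c hx) hX hX0 hy

/-- The left annihilator of `Y` is a two-sided ideal, since `Y` commutes up to scalars with
every homogeneous element; by simplicity it is zero. -/
theorem isUnit [IsSimpleRing A] [IsArtinianRing A] (h𝒟 : IsGradingOfType2f 𝒟 β) {v : T} {Y : A}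
    (hY : Y ∈ 𝒟 v) (hY0 : Y ≠ 0) : IsUnit Y := by
  rw [IsArtinianRing.isUnit_iff_isRightRegular, isRightRegular_iff_left_eq_zero_of_mul]
  have hright : ∀ a b : A, a * Y = 0 → a * b * Y = 0 := by
    intro a b ha
    have hb : b ∈ ⨆ t, 𝒟 t := h𝒟.iSup_eq_top ▸ Submodule.mem_top
    induction hb using Submodule.iSup_induction' with
    | mem t b hb =>
      rw [mul_assoc, h𝒟.mul_eq_smul_mul t v b hb Y hY, mul_smul_comm, ← mul_assoc, ha,
        zero_mul, smul_zero]
    | zero => rw [mul_zero, zero_mul]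
    | add b₁ b₂ _ _ h₁ h₂ => rw [mul_add, add_mul, h₁, h₂, add_zero]
  let I : TwoSidedIdeal A := .mk' {a | a * Y = 0} (zero_mul Y)
    (fun ha hb => by simp_all [add_mul]) (fun ha => by simp_all [neg_mul])
    (fun hb => by simp_all [mul_assoc]) (fun ha => hright _ _ ha)
  have hI : I = ⊥ := (eq_bot_or_eq_top I).resolve_right fun h => by
    have h1 : (1 : A) ∈ I := h ▸ trivial
    exact hY0 (by simpa using (TwoSidedIdeal.mem_mk' ..).mp h1)
  intro a ha
  have haI : a ∈ I := (TwoSidedIdeal.mem_mk' ..).mpr ha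
  rwa [hI, TwoSidedIdeal.mem_bot] at haI

theorem mul_ne_zero [IsSimpleRing A] [IsArtinianRing A] (h𝒟 : IsGradingOfType2f 𝒟 β) {u v : T}
    {X Y : A} (hX : X ∈ 𝒟 u) (hX0 : X ≠ 0) (hY : Y ∈ 𝒟 v) (hY0 : Y ≠ 0) : X * Y ≠ 0 :=
  ((h𝒟.isUnit hX hX0).mul (h𝒟.isUnit hY hY0)).ne_zero

theorem exists_unit_mem [IsSimpleRing A] [IsArtinianRing A] (h𝒟 : IsGradingOfType2f 𝒟 β)
    (t : T) : ∃ U : Aˣ, (U : A) ∈ 𝒟 t :=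
  let ⟨_, hx, hx0⟩ := h𝒟.exists_ne_zero t
  ⟨(h𝒟.isUnit hx hx0).unit, hx⟩

theorem algEquiv_ext (h𝒟 : IsGradingOfType2f 𝒟 β) {ψ ψ' : A ≃ₐ[ℝ] A}
    (h : ∀ t, ∀ x ∈ 𝒟 t, ψ x = ψ' x) : ψ = ψ' := by
  have hle : ⨆ t, 𝒟 t ≤ LinearMap.eqLocus ψ.toLinearMap ψ'.toLinearMap := iSup_le h
  rw [h𝒟.iSup_eq_top] at hle
  exact AlgEquiv.ext fun x => hle Submodule.mem_top

theorem eq_of_actsByCharacter (h𝒟 : IsGradingOfType2f 𝒟 β) {ψ ψ' : A ≃ₐ[ℝ] A}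
    {χ : T →+ Additive ℂˣ} (hψ : ActsByCharacter 𝒟 ψ χ) (hψ' : ActsByCharacter 𝒟 ψ' χ) :
    ψ = ψ' :=
  h𝒟.algEquiv_ext fun t x hx => by rw [hψ t x hx, hψ' t x hx]

theorem character_eq_of_actsByCharacter (h𝒟 : IsGradingOfType2f 𝒟 β) {ψ : A ≃ₐ[ℝ] A}
    {χ χ' : T →+ Additive ℂˣ} (hχ : ActsByCharacter 𝒟 ψ χ) (hχ' : ActsByCharacter 𝒟 ψ χ') :
    χ = χ' := by
  ext t : 1
  obtain ⟨X, hX, hX0⟩ := h𝒟.exists_ne_zero t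
  exact congrArg Additive.ofMul <| Units.ext <|
    smul_left_injective ℂ hX0 ((hχ t X hX).symm.trans (hχ' t X hX))

theorem mem_of_actsByCharacter (h𝒟 : IsGradingOfType2f 𝒟 β) {ψ : A ≃ₐ[ℝ] A}
    {χ : T →+ Additive ℂˣ} (hψ : ActsByCharacter 𝒟 ψ χ) {t : T} {x : A} (hx : x ∈ 𝒟 t) :
    ψ x ∈ 𝒟 t :=
  hψ t x hx ▸ h𝒟.smul_mem _ hx

theorem actsByCharacter_mul (h𝒟 : IsGradingOfType2f 𝒟 β) {ψ ψ' : A ≃ₐ[ℝ] A}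
    {χ χ' : T →+ Additive ℂˣ} (hψ : ActsByCharacter 𝒟 ψ χ) (hψ' : ActsByCharacter 𝒟 ψ' χ') :
    ActsByCharacter 𝒟 (ψ * ψ') (χ + χ') := by
  intro t x hx
  rw [AlgEquiv.mul_apply, hψ' t x hx, hψ t _ (h𝒟.smul_mem _ hx), smul_smul]
  rfl

theorem actsByCharacter_conj (h𝒟 : IsGradingOfType2f 𝒟 β)
    (hβ₁ : ∀ u v w : T, β (u + v) w = β u w * β v w)
    (hβ₂ : ∀ u v w : T, β u (v + w) = β u v * β u w) {u : T} (U : Aˣ) (hU : (U : A) ∈ 𝒟 u) :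
    ActsByCharacter 𝒟 (MulSemiringAction.toAlgEquiv ℝ A (ConjAct.toConjAct U⁻¹))
      (rightDual β hβ₁ hβ₂ u) := by
  intro t x hx
  show ↑U⁻¹ * x * ↑U⁻¹⁻¹ = (β t u : ℂ) • x
  rw [inv_inv, mul_assoc, h𝒟.mul_eq_smul_mul t u x hx U hU, mul_smul_comm, ← mul_assoc,
    Units.inv_mul, one_mul]

theorem conj_eq_of_antilinear [IsSimpleRing A] [IsArtinianRing A]
    (h𝒟 : IsGradingOfType2f 𝒟 β) {ψ : A ≃ₐ[ℝ] A} (hψ : ∀ t : T, ∀ x ∈ 𝒟 t, ψ x ∈ 𝒟 t)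
    (hanti : ∀ (c : ℂ) (x : A), ψ (c • x) = conj c • ψ x) (u v : T) :
    conj (β u v : ℂ) = β u v := by
  obtain ⟨X, hX, hX0⟩ := h𝒟.exists_ne_zero u
  obtain ⟨Y, hY, hY0⟩ := h𝒟.exists_ne_zero v
  have hψ0 : ψ Y * ψ X ≠ 0 :=
    h𝒟.mul_ne_zero (hψ v Y hY) ((map_ne_zero_iff ψ ψ.injective).mpr hY0)
      (hψ u X hX) ((map_ne_zero_iff ψ ψ.injective).mpr hX0)
  refine smul_left_injective ℂ hψ0 ?_
  calc conj (β u v : ℂ) • (ψ Y * ψ X) = ψ (X * Y) := by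
        rw [h𝒟.mul_eq_smul_mul u v X hX Y hY, hanti, map_mul]
    _ = (β u v : ℂ) • (ψ Y * ψ X) := by
        rw [map_mul]
        exact h𝒟.mul_eq_smul_mul u v _ (hψ u X hX) _ (hψ v Y hY)

theorem exists_smul_of_linear (h𝒟 : IsGradingOfType2f 𝒟 β) {ψ : A ≃ₐ[ℝ] A}
    (hψ : ∀ t : T, ∀ x ∈ 𝒟 t, ψ x ∈ 𝒟 t) (hlin : ∀ (c : ℂ) (x : A), ψ (c • x) = c • ψ x)
    (t : T) : ∃ c : ℂˣ, ∀ x ∈ 𝒟 t, ψ x = (c : ℂ) • x := by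
  obtain ⟨X, hX, hX0⟩ := h𝒟.exists_ne_zero t
  obtain ⟨c, hc⟩ := h𝒟.exists_smul_eq hX hX0 (hψ t X hX)
  have hc0 : c ≠ 0 := by
    rintro rfl
    exact (map_ne_zero_iff ψ ψ.injective).mpr hX0 (by rw [← hc, zero_smul])
  refine ⟨Units.mk0 c hc0, fun x hx => ?_⟩
  obtain ⟨d, rfl⟩ := h𝒟.exists_smul_eq hX hX0 hx
  rw [hlin, ← hc, Units.val_mk0, smul_comm]

theorem exists_actsByCharacter_of_linear [IsSimpleRing A] [IsArtinianRing A]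
    (h𝒟 : IsGradingOfType2f 𝒟 β) {ψ : A ≃ₐ[ℝ] A} (hψ : ∀ t : T, ∀ x ∈ 𝒟 t, ψ x ∈ 𝒟 t)
    (hlin : ∀ (c : ℂ) (x : A), ψ (c • x) = c • ψ x) : ∃ χ, ActsByCharacter 𝒟 ψ χ := by
  choose c hc using h𝒟.exists_smul_of_linear hψ hlin
  have hc_add : ∀ u v, c (u + v) = c u * c v := by
    intro u v
    obtain ⟨X, hX, hX0⟩ := h𝒟.exists_ne_zero u
    obtain ⟨Y, hY, hY0⟩ := h𝒟.exists_ne_zero v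
    refine Units.ext (smul_left_injective ℂ (h𝒟.mul_ne_zero hX hX0 hY hY0) ?_)
    calc (c (u + v) : ℂ) • (X * Y) = ψ (X * Y) := (hc _ _ (h𝒟.mul_mem u v X hX Y hY)).symm
      _ = ((c u * c v : ℂˣ) : ℂ) • (X * Y) := by
        rw [map_mul, hc u X hX, hc v Y hY, smul_mul_smul_comm, Units.val_mul]
  exact ⟨.mk' (fun t => .ofMul (c t)) fun u v => congrArg Additive.ofMul (hc_add u v), hc⟩

theorem exists_actsByCharacter [IsSimpleRing A] [IsArtinianRing A]
    (h𝒟 : IsGradingOfType2f 𝒟 β) (hne : ∃ u v : T, (β u v : ℂ) ≠ conj (β u v : ℂ)) {ψ : A ≃ₐ[ℝ] A}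
    (hψ : ∀ t : T, ∀ x ∈ 𝒟 t, ψ x ∈ 𝒟 t) : ∃ χ, ActsByCharacter 𝒟 ψ χ := by
  have hI : ψ (algebraMap ℂ A Complex.I) ∈ Set.range (algebraMap ℂ A) := by
    rw [← h𝒟.coe_zero_eq_range]
    exact hψ 0 _ (h𝒟.algebraMap_mem _)
  rcases ψ.complex_linear_or_antilinear hI with hlin | hanti
  · exact h𝒟.exists_actsByCharacter_of_linear hψ hlin
  · obtain ⟨u, v, huv⟩ := hne
    exact absurd (h𝒟.conj_eq_of_antilinear hψ hanti u v).symm huv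

end IsGradingOfType2f

end

theorem stabilizer_of_type2f_grading_beta_ne_conj_general
    {T : Type*} [AddCommGroup T] [Fintype T] (n : ℕ)
    (β : T → T → ℂˣ)
    (hβ₁ : ∀ u v w : T, β (u + v) w = β u w * β v w)
    (hβ₂ : ∀ u v w : T, β u (v + w) = β u v * β u w)
    (hβnondeg : ∀ t : T, (∀ u : T, β u t = 1) → t = 0)
    (𝒟 : T → Submodule ℝ (Matrix (Fin n) (Fin n) ℂ))
    (hmul : ∀ u v : T, ∀ x ∈ 𝒟 u, ∀ y ∈ 𝒟 v, x * y ∈ 𝒟 (u + v))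
    (htop : (⨆ t, 𝒟 t) = ⊤)
    (hdim : ∀ t : T, Module.finrank ℝ (𝒟 t) = 2)
    (hcenter : (𝒟 0 : Set (Matrix (Fin n) (Fin n) ℂ)) =
      Set.center (Matrix (Fin n) (Fin n) ℂ))
    (hcomm : ∀ u v : T, ∀ X ∈ 𝒟 u, ∀ Y ∈ 𝒟 v,
      X * Y = ((β u v : ℂ)) • (Y * X))
    (hne : ∃ u v : T, (β u v : ℂ) ≠ (starRingEnd ℂ) ((β u v : ℂ))) :
    (∀ ψ : Matrix (Fin n) (Fin n) ℂ ≃ₐ[ℝ] Matrix (Fin n) (Fin n) ℂ,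
        (∀ t : T, ∀ x ∈ 𝒟 t, ψ x ∈ 𝒟 t) →
        ∃ U : (Matrix (Fin n) (Fin n) ℂ)ˣ, ∀ x, ψ x = (U : Matrix (Fin n) (Fin n) ℂ) * x * ((U⁻¹ : (Matrix (Fin n) (Fin n) ℂ)ˣ) : Matrix (Fin n) (Fin n) ℂ)) ∧
    (∃ Φ : (T →+ Additive ℂˣ) →
        (Matrix (Fin n) (Fin n) ℂ ≃ₐ[ℝ] Matrix (Fin n) (Fin n) ℂ),
      (∀ χ₁ χ₂, Φ (χ₁ + χ₂) = Φ χ₁ * Φ χ₂) ∧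
      Function.Injective Φ ∧
      (∀ χ, ∀ t : T, ∀ x ∈ 𝒟 t, (Φ χ) x ∈ 𝒟 t) ∧
      (∀ ψ : Matrix (Fin n) (Fin n) ℂ ≃ₐ[ℝ] Matrix (Fin n) (Fin n) ℂ,
        (∀ t : T, ∀ x ∈ 𝒟 t, ψ x ∈ 𝒟 t) → ∃ χ, Φ χ = ψ)) ∧
    Nonempty ((T →+ Additive ℂˣ) ≃+ T) := by
  have hscalar : (𝒟 0 : Set (Matrix (Fin n) (Fin n) ℂ)) = Set.range (algebraMap ℂ _) := by
    rw [hcenter, ← Algebra.coe_bot, ← Algebra.IsCentral.center_eq_bot ℂ, Subalgebra.coe_center]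
    rfl
  have h𝒟 : IsGradingOfType2f 𝒟 β := ⟨hmul, htop, hdim, hscalar, hcomm⟩
  obtain ⟨x, -, hx0⟩ := h𝒟.exists_ne_zero 0
  have : Nonempty (Fin n) := not_isEmpty_iff.mp fun _ => hx0 (Subsingleton.elim x 0)
  choose X hX using h𝒟.exists_unit_mem
  let E := AddEquiv.ofBijective (rightDual β hβ₁ hβ₂) (rightDual_bijective hβ₁ hβ₂ hβnondeg)
  let Φ (χ : T →+ Additive ℂˣ) : Matrix (Fin n) (Fin n) ℂ ≃ₐ[ℝ] Matrix (Fin n) (Fin n) ℂ :=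
    MulSemiringAction.toAlgEquiv ℝ _ (ConjAct.toConjAct (X (E.symm χ))⁻¹)
  have hΦ (χ : T →+ Additive ℂˣ) : ActsByCharacter 𝒟 (Φ χ) χ := by
    convert h𝒟.actsByCharacter_conj hβ₁ hβ₂ _ (hX (E.symm χ))
    exact (E.apply_symm_apply χ).symm
  have hΦ_surj : ∀ ψ : Matrix (Fin n) (Fin n) ℂ ≃ₐ[ℝ] Matrix (Fin n) (Fin n) ℂ,
      (∀ t : T, ∀ x ∈ 𝒟 t, ψ x ∈ 𝒟 t) → ∃ χ, Φ χ = ψ := fun ψ hψ =>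
    (h𝒟.exists_actsByCharacter hne hψ).imp fun χ hχ => h𝒟.eq_of_actsByCharacter (hΦ χ) hχ
  refine ⟨fun ψ hψ => ?_, ⟨Φ, fun χ₁ χ₂ => ?_, fun χ₁ χ₂ h => ?_, fun χ t x hx => ?_, hΦ_surj⟩,
    ⟨E.symm⟩⟩
  · obtain ⟨χ, rfl⟩ := hΦ_surj ψ hψ
    exact ⟨(X (E.symm χ))⁻¹, fun x => rfl⟩
  · exact h𝒟.eq_of_actsByCharacter (hΦ _) (h𝒟.actsByCharacter_mul (hΦ χ₁) (hΦ χ₂))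
  · exact h𝒟.character_eq_of_actsByCharacter (hΦ χ₁) (h ▸ hΦ χ₂)
  · exact h𝒟.mem_of_actsByCharacter (hΦ χ) hx

/-- Let `T` be a finite abelian group, `β : T × T → ℂˣ` a nondegenerate alternating
bicharacter, and `𝒟` a division grading of type (2-f) on the real algebra `M_n(ℂ)`
with support `T`, two-dimensional components, identity component equal to the
center, and commutation relations `X_u X_v = β(u,v) X_v X_u`.  If `β ≠ β̄`, then
every automorphism of the real algebra stabilizing the grading is inner, and the
stabilizer of the grading is isomorphic to `Hom(T, ℂˣ) ≅ T`. -/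
theorem stabilizer_of_type2f_grading_beta_ne_conj
    {T : Type*} [AddCommGroup T] [Fintype T] (n : ℕ)
    (β : T → T → ℂˣ)
    (hβ₁ : ∀ u v w : T, β (u + v) w = β u w * β v w)
    (hβ₂ : ∀ u v w : T, β u (v + w) = β u v * β u w)
    (hβalt : ∀ u : T, β u u = 1)
    (hβnondeg : ∀ t : T, (∀ u : T, β u t = 1) → t = 0)
    (𝒟 : T → Submodule ℝ (Matrix (Fin n) (Fin n) ℂ))
    (hmul : ∀ u v : T, ∀ x ∈ 𝒟 u, ∀ y ∈ 𝒟 v, x * y ∈ 𝒟 (u + v))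
    (hone : (1 : Matrix (Fin n) (Fin n) ℂ) ∈ 𝒟 0)
    (hindep : iSupIndep 𝒟) (htop : (⨆ t, 𝒟 t) = ⊤)
    (hsupp : ∀ t : T, 𝒟 t ≠ ⊥)
    (hdim : ∀ t : T, Module.finrank ℝ (𝒟 t) = 2)
    (hcenter : (𝒟 0 : Set (Matrix (Fin n) (Fin n) ℂ)) =
      Set.center (Matrix (Fin n) (Fin n) ℂ))
    (hcomm : ∀ u v : T, ∀ X ∈ 𝒟 u, ∀ Y ∈ 𝒟 v,
      X * Y = ((β u v : ℂ)) • (Y * X))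
    (hne : ∃ u v : T, (β u v : ℂ) ≠ (starRingEnd ℂ) ((β u v : ℂ))) :
    (∀ ψ : Matrix (Fin n) (Fin n) ℂ ≃ₐ[ℝ] Matrix (Fin n) (Fin n) ℂ,
        (∀ t : T, ∀ x ∈ 𝒟 t, ψ x ∈ 𝒟 t) →
        ∃ U : (Matrix (Fin n) (Fin n) ℂ)ˣ, ∀ x, ψ x = (U : Matrix (Fin n) (Fin n) ℂ) * x * ((U⁻¹ : (Matrix (Fin n) (Fin n) ℂ)ˣ) : Matrix (Fin n) (Fin n) ℂ)) ∧
    (∃ Φ : (T →+ Additive ℂˣ) →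
        (Matrix (Fin n) (Fin n) ℂ ≃ₐ[ℝ] Matrix (Fin n) (Fin n) ℂ),
      (∀ χ₁ χ₂, Φ (χ₁ + χ₂) = Φ χ₁ * Φ χ₂) ∧
      Function.Injective Φ ∧
      (∀ χ, ∀ t : T, ∀ x ∈ 𝒟 t, (Φ χ) x ∈ 𝒟 t) ∧
      (∀ ψ : Matrix (Fin n) (Fin n) ℂ ≃ₐ[ℝ] Matrix (Fin n) (Fin n) ℂ,
        (∀ t : T, ∀ x ∈ 𝒟 t, ψ x ∈ 𝒟 t) → ∃ χ, Φ χ = ψ)) ∧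
    Nonempty ((T →+ Additive ℂˣ) ≃+ T) :=
  stabilizer_of_type2f_grading_beta_ne_conj_general n β hβ₁ hβ₂ hβnondeg 𝒟 hmul htop hdim hcenter
    hcomm hne
end

section
/- Let G be an abelian group, D a G-graded-division algebra over a field F with support T and identity component D_e, and let R = M_k(D) carry the grading determined by g_1,…,g_k satisfying the fine condition. Then the stabilizer of the grading on R is isomorphic to the semidirect product (D_e^×)^{k-1} ⋊ Stab(Γ_0), where Stab(Γ_0) is the stabilizer of the division grading on D acting componentwise on (D_e^×)^{k-1}. -/
/-!
For `i ≠ j` the fine condition leaves no room for `Ψ(E_ij)` outside the `(i, j)` entry, so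
`Ψ(E_ii) = Ψ(E_ij) Ψ(E_ji)` is a multiple of `E_ii` by a nonzero idempotent of degree `0`, which
is a unit and hence `1`. An automorphism of `M_k(D)` fixing every `E_ii` is `X ↦ U ψ₀(X) U⁻¹`,
where `ψ₀` is its restriction to the corner `E_00 M_k(D) E_00 ≅ D` and `U = diag(u_p)` with `u_p`
the entry of `Ψ(E_p0)`; then `u_0 = 1` and the grading forces `u_p ∈ D_e`. Conversely such maps
preserve the grading because the inverse of a unit of degree `0` again has degree `0`.
-/

open Matrix

section DiagConj

variable {R A : Type*} [CommSemiring R] [Semiring A] [Algebra R A]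
  {ι : Type*} [Fintype ι] [DecidableEq ι]

def diagConj (u : ι → Aˣ) (ψ : A ≃ₐ[R] A) : Matrix ι ι A ≃ₐ[R] Matrix ι ι A :=
  ψ.mapMatrix.trans <| MulSemiringAction.toAlgEquiv R _ <| ConjAct.toConjAct <|
    Units.map (diagonalRingHom ι A).toMonoidHom (MulEquiv.piUnits.symm u)

@[simp]
theorem diagConj_apply (u : ι → Aˣ) (ψ : A ≃ₐ[R] A) (M : Matrix ι ι A) (i j : ι) :
    diagConj u ψ M i j = u i * ψ (M i j) * ↑(u j)⁻¹ := by
  simp [diagConj, ConjAct.units_smul_def, mul_diagonal, diagonal_mul, mul_assoc]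

theorem eq_of_diagConj_eq {u u' : ι → Aˣ} {ψ ψ' : A ≃ₐ[R] A} {i₀ : ι}
    (hu : u i₀ = 1) (hu' : u' i₀ = 1) (h : diagConj u ψ = diagConj u' ψ') :
    u = u' ∧ ψ = ψ' := by
  have h_apply (x : A) (i : ι) := congr($h (of fun _ _ => x) i i₀)
  refine ⟨funext fun i => Units.ext ?_, AlgEquiv.ext fun x => ?_⟩
  · simpa [hu, hu'] using h_apply 1 i
  · simpa [hu, hu'] using h_apply x i₀

theorem diagConj_mul_diagConj {u u' u'' : ι → Aˣ} {ψ ψ' : A ≃ₐ[R] A}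
    (hu'' : ∀ i, (u'' i : A) = u i * ψ (u' i)) :
    diagConj u ψ * diagConj u' ψ' = diagConj u'' (ψ * ψ') := by
  have hu''_units : u'' = fun i => u i * Units.map ψ.toMonoidHom (u' i) :=
    funext fun i => Units.ext (hu'' i)
  ext M i j
  simp [hu''_units, mul_assoc]

end DiagConj

namespace AlgEquiv

variable {R A : Type*} [CommSemiring R] [Semiring A] [Algebra R A]
  {ι : Type*} [Fintype ι] [DecidableEq ι]
  (Θ : Matrix ι ι A ≃ₐ[R] Matrix ι ι A) (hΘ : ∀ i, Θ (single i i 1) = single i i 1)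
include hΘ

theorem apply_eq_map_single_apply (M : Matrix ι ι A) (i j : ι) :
    Θ M i j = Θ (single i j (M i j)) i j := by
  have h := congr(Θ $(single_mul_mul_single i i j j 1 M 1))
  rw [map_mul, map_mul, hΘ, hΘ, one_mul, mul_one] at h
  simpa using congr($h i j)

theorem map_single_eq_single (i j : ι) (x : A) :
    Θ (single i j x) = single i j (Θ (single i j x) i j) := by
  have h := congr(Θ $(single_mul_mul_single i i j j 1 (single i j x) 1))
  rw [map_mul, map_mul, hΘ, hΘ, single_mul_mul_single] at h
  simpa using h.symm

theorem map_single_apply_mul (i j l : ι) (x y : A) :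
    Θ (single i j x) i j * Θ (single j l y) j l = Θ (single i l (x * y)) i l := by
  have h := congr(Θ $(single_mul_single_same x i j l y))
  rw [map_mul, Θ.map_single_eq_single hΘ i j, Θ.map_single_eq_single hΘ j l,
    single_mul_single_same] at h
  simpa using congr($h i l)

theorem symm_map_single_diag (i : ι) : Θ.symm (single i i 1) = single i i 1 := by
  rw [AlgEquiv.symm_apply_eq, hΘ]

def cornerAlgEquiv (i₀ : ι) : A ≃ₐ[R] A where
  toFun x := Θ (single i₀ i₀ x) i₀ i₀
  invFun x := Θ.symm (single i₀ i₀ x) i₀ i₀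
  left_inv x := by simp [← Θ.map_single_eq_single hΘ]
  right_inv x := by
    simp [← map_single_eq_single Θ.symm (Θ.symm_map_single_diag hΘ)]
  map_mul' x y := (Θ.map_single_apply_mul hΘ i₀ i₀ i₀ x y).symm
  map_add' x y := by simp [single_add]
  commutes' r := by
    rw [Algebra.algebraMap_eq_smul_one, ← smul_single, map_smul, Matrix.smul_apply, hΘ,
      single_apply_same]

def cornerUnit (i₀ p : ι) : Aˣ where
  val := Θ (single p i₀ 1) p i₀
  inv := Θ (single i₀ p 1) i₀ p
  val_inv := by rw [Θ.map_single_apply_mul hΘ, one_mul, hΘ, single_apply_same]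
  inv_val := by rw [Θ.map_single_apply_mul hΘ, one_mul, hΘ, single_apply_same]

theorem cornerUnit_self (i₀ : ι) : cornerUnit Θ hΘ i₀ i₀ = 1 :=
  Units.ext <| by simp [cornerUnit, hΘ]

theorem diagConj_cornerUnit_cornerAlgEquiv (i₀ : ι) :
    diagConj (cornerUnit Θ hΘ i₀) (cornerAlgEquiv Θ hΘ i₀) = Θ := by
  ext M i j
  rw [diagConj_apply, Θ.apply_eq_map_single_apply hΘ M i j]
  change Θ (single i i₀ 1) i i₀ * Θ (single i₀ i₀ (M i j)) i₀ i₀ * Θ (single i₀ j 1) i₀ j = _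
  rw [Θ.map_single_apply_mul hΘ, Θ.map_single_apply_mul hΘ, one_mul, mul_one]

end AlgEquiv

theorem GradedRing.units_inv_mem_zero {ι σ A : Type*} [AddMonoid ι] [DecidableEq ι] [Semiring A]
    [SetLike σ A] [AddSubmonoidClass σ A] (𝒜 : ι → σ) [GradedRing 𝒜] (w : Aˣ)
    (hw : (w : A) ∈ 𝒜 0) : ((w⁻¹ : Aˣ) : A) ∈ 𝒜 0 := by
  set x := DirectSum.decompose 𝒜 ((w⁻¹ : Aˣ) : A) 0
  have hx : (w : A) * x = 1 := by
    rw [← DirectSum.coe_decompose_mul_of_left_mem_zero 𝒜 hw, Units.mul_inv,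
      DirectSum.decompose_of_mem_same 𝒜 SetLike.GradedOne.one_mem]
  have h : ((w⁻¹ : Aˣ) : A) = x := by
    rw [← Units.inv_mul_cancel_left w x, hx, mul_one]
  exact h ▸ x.2

section Grading

variable {G : Type*} [AddCommGroup G] {F : Type*} [Field F] {D : Type*} [Ring D] [Algebra F D]
  {k : ℕ} {g : Fin k → G} {𝒟 : G → Submodule F D}

theorem single_mem_matGrading {b : G} {x : D} (hx : x ∈ 𝒟 b) (p q : Fin k) :
    single p q x ∈ MatGrading k g 𝒟 (g p - g q + b) := by
  intro i j
  by_cases h : p = i ∧ q = j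
  · obtain ⟨rfl, rfl⟩ := h
    rw [single_apply_same, show -g p + (g p - g q + b) + g q = b by abel]
    exact hx
  · rw [single_apply_of_ne _ _ _ _ _ h]
    exact zero_mem _

theorem diagConj_mem_matGrading
    (hmul : ∀ a b : G, ∀ x ∈ 𝒟 a, ∀ y ∈ 𝒟 b, x * y ∈ 𝒟 (a + b))
    {u : Fin k → Dˣ} (hu : ∀ i, (u i : D) ∈ 𝒟 0) (hu_inv : ∀ i, (((u i)⁻¹ : Dˣ) : D) ∈ 𝒟 0)
    {ψ : D ≃ₐ[F] D} (hψ : ∀ a : G, ∀ x ∈ 𝒟 a, ψ x ∈ 𝒟 a)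
    {a : G} {M : Matrix (Fin k) (Fin k) D} (hM : M ∈ MatGrading k g 𝒟 a) :
    diagConj u ψ M ∈ MatGrading k g 𝒟 a := by
  intro i j
  rw [diagConj_apply]
  simpa using hmul _ _ _ (hmul _ _ _ (hu i) _ (hψ _ _ (hM i j))) _ (hu_inv j)

variable (hone : (1 : D) ∈ 𝒟 0)
  (hfine : ∀ i j h l : Fin k, i ≠ j → (i, j) ≠ (h, l) → 𝒟 (g i - g j - (g h - g l)) = ⊥)
  {Ψ : Matrix (Fin k) (Fin k) D ≃ₐ[F] Matrix (Fin k) (Fin k) D}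
  (hΨ : ∀ a : G, ∀ M ∈ MatGrading k g 𝒟 a, Ψ M ∈ MatGrading k g 𝒟 a)
include hone hfine hΨ

theorem map_single_one_eq_single_of_ne {i j : Fin k} (hij : i ≠ j) :
    Ψ (single i j 1) = single i j (Ψ (single i j 1) i j) := by
  ext p q
  by_cases h : i = p ∧ j = q
  · obtain ⟨rfl, rfl⟩ := h
    rw [single_apply_same]
  · rw [single_apply_of_ne i j _ p q h]
    have hmem := hΨ _ _ (single_mem_matGrading hone i j) p q
    rwa [show -g p + (g i - g j + 0) + g q = g i - g j - (g p - g q) by abel,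
      hfine i j p q hij (by simpa [Prod.ext_iff] using h), Submodule.mem_bot] at hmem

theorem map_single_diag_of_fine (hdiv : ∀ a : G, ∀ d ∈ 𝒟 a, d ≠ 0 → IsUnit d) (i : Fin k) :
    Ψ (single i i 1) = single i i 1 := by
  by_cases hsub : ∀ j, j = i
  · have h1 : single i i (1 : D) = 1 := by
      ext p q
      rw [hsub p, hsub q, single_apply_same, one_apply_eq]
    rw [h1, map_one]
  push Not at hsub
  obtain ⟨j, hji⟩ := hsub
  set e := Ψ (single i j 1) i j * Ψ (single j i 1) j i
  have hE : Ψ (single i i 1) = single i i e := by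
    rw [← mul_one (1 : D), ← single_mul_single_same 1 i j i, map_mul,
      map_single_one_eq_single_of_ne hone hfine hΨ hji.symm,
      map_single_one_eq_single_of_ne hone hfine hΨ hji, single_mul_single_same]
  by_cases he0 : e = 0
  · have h0 : Ψ (single i i 1) = Ψ 0 := by rw [hE, he0, single_zero, map_zero]
    rw [Ψ.injective h0, map_zero]
  have he_mem : e ∈ 𝒟 0 := by
    have h := hΨ _ _ (single_mem_matGrading hone i i) i i
    rwa [hE, single_apply_same, show -g i + (g i - g i + 0) + g i = 0 by abel] at h
  have he_idem : IsIdempotentElem e := by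
    have h := congr($(map_mul Ψ (single i i 1) (single i i 1)) i i)
    rwa [single_mul_single_same, mul_one, hE, single_mul_single_same, single_apply_same,
      single_apply_same, eq_comm] at h
  rw [hE, (IsIdempotentElem.iff_eq_one_of_isUnit (hdiv 0 e he_mem he0)).mp he_idem]

theorem exists_diagConj_eq_of_fine (hdiv : ∀ a : G, ∀ d ∈ 𝒟 a, d ≠ 0 → IsUnit d) (i₀ : Fin k) :
    ∃ (u : Fin k → Dˣ) (ψ : D ≃ₐ[F] D), u i₀ = 1 ∧ (∀ p, (u p : D) ∈ 𝒟 0) ∧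
      (∀ a : G, ∀ x ∈ 𝒟 a, ψ x ∈ 𝒟 a) ∧ diagConj u ψ = Ψ := by
  have hΨE := map_single_diag_of_fine hone hfine hΨ hdiv
  refine ⟨Ψ.cornerUnit hΨE i₀, Ψ.cornerAlgEquiv hΨE i₀, Ψ.cornerUnit_self hΨE i₀,
    fun p => ?_, fun a x hx => ?_, Ψ.diagConj_cornerUnit_cornerAlgEquiv hΨE i₀⟩
  · have h := hΨ _ _ (single_mem_matGrading hone p i₀) p i₀
    rwa [show -g p + (g p - g i₀ + 0) + g i₀ = 0 by abel] at h
  · have h := hΨ _ _ (single_mem_matGrading hx i₀ i₀) i₀ i₀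
    rwa [show -g i₀ + (g i₀ - g i₀ + a) + g i₀ = a by abel] at h

end Grading

/-- Let `D` be a `G`-graded-division algebra over `F` (`G` abelian) with identity
component `D_e`, and let `R = M_k(D)` carry the grading determined by degrees
`g 1, …, g k` satisfying the fine condition.  Then the stabilizer of the grading of
`R` is isomorphic to the semidirect product `(D_e^×)^{k-1} ⋊ Stab(Γ₀)`, the
stabilizer `Stab(Γ₀)` of the division grading acting componentwise: there is a map
`Φ` from pairs (a `(k-1)`-tuple of units of `D_e`, an automorphism in `Stab(Γ₀)`)
to automorphisms of `R`, injective, with image exactly `Stab(Γ)`, satisfying the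
semidirect-product multiplication law. -/
theorem stabilizer_of_matrix_grading
    {G : Type*} [AddCommGroup G] {F : Type*} [Field F]
    {D : Type*} [Ring D] [Algebra F D]
    (k : ℕ) (hk : 0 < k) (g : Fin k → G) (𝒟 : G → Submodule F D)
    (hone : (1 : D) ∈ 𝒟 0)
    (hmul : ∀ a b : G, ∀ x ∈ 𝒟 a, ∀ y ∈ 𝒟 b, x * y ∈ 𝒟 (a + b))
    (hindep : iSupIndep 𝒟) (htop : (⨆ a, 𝒟 a) = ⊤)
    (hdiv : ∀ a : G, ∀ d ∈ 𝒟 a, d ≠ 0 → IsUnit d)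
    (hfine : ∀ i j h l : Fin k, i ≠ j → (i, j) ≠ (h, l) →
      𝒟 (g i - g j - (g h - g l)) = ⊥) :
    ∃ Φ : (Fin (k - 1) → Dˣ) → (D ≃ₐ[F] D) →
        (Matrix (Fin k) (Fin k) D ≃ₐ[F] Matrix (Fin k) (Fin k) D),
      -- `Φ` lands in the stabilizer of the grading of `R`
      (∀ (d : Fin (k - 1) → Dˣ) (ψ₀ : D ≃ₐ[F] D),
        (∀ i, ((d i : Dˣ) : D) ∈ 𝒟 0) → (∀ a : G, ∀ x ∈ 𝒟 a, ψ₀ x ∈ 𝒟 a) →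
        ∀ a : G, ∀ M ∈ MatGrading k g 𝒟 a, (Φ d ψ₀) M ∈ MatGrading k g 𝒟 a) ∧
      -- `Φ` is injective on its domain
      (∀ (d d' : Fin (k - 1) → Dˣ) (ψ₀ ψ₀' : D ≃ₐ[F] D),
        (∀ i, ((d i : Dˣ) : D) ∈ 𝒟 0) → (∀ a : G, ∀ x ∈ 𝒟 a, ψ₀ x ∈ 𝒟 a) →
        (∀ i, ((d' i : Dˣ) : D) ∈ 𝒟 0) → (∀ a : G, ∀ x ∈ 𝒟 a, ψ₀' x ∈ 𝒟 a) →
        Φ d ψ₀ = Φ d' ψ₀' → d = d' ∧ ψ₀ = ψ₀') ∧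
      -- `Φ` is onto the stabilizer of the grading of `R`
      (∀ Ψ : Matrix (Fin k) (Fin k) D ≃ₐ[F] Matrix (Fin k) (Fin k) D,
        (∀ a : G, ∀ M ∈ MatGrading k g 𝒟 a, Ψ M ∈ MatGrading k g 𝒟 a) →
        ∃ (d : Fin (k - 1) → Dˣ) (ψ₀ : D ≃ₐ[F] D),
          (∀ i, ((d i : Dˣ) : D) ∈ 𝒟 0) ∧ (∀ a : G, ∀ x ∈ 𝒟 a, ψ₀ x ∈ 𝒟 a) ∧
          Φ d ψ₀ = Ψ) ∧
      -- the semidirect-product multiplication law, with `Stab(Γ₀)` acting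
      -- componentwise on `(D_e^×)^{k-1}`
      (∀ (d d' d'' : Fin (k - 1) → Dˣ) (ψ₀ ψ₀' : D ≃ₐ[F] D),
        (∀ i, ((d i : Dˣ) : D) ∈ 𝒟 0) → (∀ a : G, ∀ x ∈ 𝒟 a, ψ₀ x ∈ 𝒟 a) →
        (∀ i, ((d' i : Dˣ) : D) ∈ 𝒟 0) → (∀ a : G, ∀ x ∈ 𝒟 a, ψ₀' x ∈ 𝒟 a) →
        (∀ i, ((d'' i : Dˣ) : D) = ((d i : Dˣ) : D) * ψ₀ ((d' i : Dˣ) : D)) →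
        Φ d ψ₀ * Φ d' ψ₀' = Φ d'' (ψ₀ * ψ₀')) := by
  classical
  obtain ⟨n, rfl⟩ : ∃ n, k = n + 1 := ⟨k - 1, by omega⟩
  let : GradedRing 𝒟 :=
    { (DirectSum.isInternal_submodule_of_iSupIndep_of_iSup_eq_top hindep htop).chooseDecomposition
      with
      one_mem := hone
      mul_mem := fun _ _ _ _ hx hy => hmul _ _ _ hx _ hy }
  have cons_mem {d : Fin n → Dˣ} (hd : ∀ i, (d i : D) ∈ 𝒟 0) (i : Fin (n + 1)) :
      ((Fin.cons 1 d : Fin (n + 1) → Dˣ) i : D) ∈ 𝒟 0 := by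
    cases i using Fin.cases <;> simp [hone, hd]
  refine ⟨fun d ψ => diagConj (Fin.cons 1 d) ψ, ?_, ?_, ?_, ?_⟩
  · intro d ψ hd hψ a M hM
    exact diagConj_mem_matGrading hmul (cons_mem hd)
      (fun i => GradedRing.units_inv_mem_zero 𝒟 _ (cons_mem hd i)) hψ hM
  · intro d d' ψ ψ' _ _ _ _ h
    obtain ⟨hu, hψ⟩ := eq_of_diagConj_eq (i₀ := 0) (Fin.cons_zero _ _) (Fin.cons_zero _ _) h
    exact ⟨Fin.cons_right_injective _ hu, hψ⟩
  · intro Ψ hΨ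
    obtain ⟨u, ψ, hu0, hu, hψ, rfl⟩ := exists_diagConj_eq_of_fine hone hfine hΨ hdiv 0
    refine ⟨Fin.tail u, ψ, fun i => hu _, hψ, ?_⟩
    conv_rhs => rw [← Fin.cons_self_tail u, hu0]
  · intro d d' d'' ψ ψ' _ _ _ _ hd''
    exact diagConj_mul_diagConj fun i => by cases i using Fin.cases <;> simp [hd'']
end
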